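/- arXiv:1812.07289 — 13 statements merged into one kernel-verified Lean document; each statement's English description precedes it below -/
import Mathlib

section
/- Let H be a complex Hilbert space and let A and B be bounded linear operators on H. Suppose A is not a scalar multiple of the identity operator. Then the following are equivalent: (i) every nonzero vector v in H that is not an eigenvector of A is an eigenvector of B; (ii) B is a scalar multiple of the identity operator. -/
private lemma scalar_of_all_eig {H : Type*} [NormedAddCommGroup H] [InnerProductSpace ℂ H]
    (T : H →L[ℂ] H) (h : ∀ v : H, v ≠ 0 → ∃ μ : ℂ, T v = μ • v) :
    ∃ c : ℂ, T = c • (1 : H →L[ℂ] H) := by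
  by_cases h0 : ∀ v : H, v = 0
  · exact ⟨0, by ext x; simp [h0 x]⟩
  push_neg at h0
  obtain ⟨v₀, hv₀⟩ := h0
  obtain ⟨c, hc⟩ := h v₀ hv₀
  refine ⟨c, ?_⟩
  ext w
  simp only [ContinuousLinearMap.smul_apply, ContinuousLinearMap.one_apply]
  by_cases hw : w = 0
  · simp [hw]
  by_cases hdep : ∃ a : ℂ, w = a • v₀
  · obtain ⟨a, rfl⟩ := hdep
    rw [map_smul, hc, smul_comm]
  · obtain ⟨μ, hμ⟩ := h w hw
    have hsum : v₀ + w ≠ 0 := by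
      intro hz
      exact hdep ⟨-1, by rw [neg_one_smul]; exact (neg_eq_of_add_eq_zero_right hz).symm⟩
    obtain ⟨ν, hν⟩ := h (v₀ + w) hsum
    rw [map_add, hc, hμ] at hν
    by_cases hνc : ν = c
    · subst hνc
      have h1 : (μ - ν) • w = 0 := by linear_combination (norm := module) hν
      rcases smul_eq_zero.mp h1 with h2 | h2
      · have : μ = ν := by linear_combination h2
        rw [hμ, this]
      · exact absurd h2 hw
    · by_cases hνμ : ν = μ
      · subst hνμ
        have h1 : (c - ν) • v₀ = 0 := by linear_combination (norm := module) hν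
        rcases smul_eq_zero.mp h1 with h2 | h2
        · exact absurd (by linear_combination -h2 : ν = c) hνc
        · exact absurd h2 hv₀
      · exfalso
        apply hdep
        refine ⟨(ν - μ)⁻¹ * (c - ν), ?_⟩
        have h1 : (ν - μ) • w = (c - ν) • v₀ := by linear_combination (norm := module) - hν
        rw [mul_smul, ← h1, inv_smul_smul₀ (sub_ne_zero.mpr hνμ)]

/-- Lemma 1: Let `H` be a complex Hilbert space and `A`, `B` bounded linear operators on `H`.
If `A` is not a scalar multiple of the identity, then every nonzero vector that is not an
eigenvector of `A` is an eigenvector of `B` if and only if `B` is a scalar multiple of the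
identity. -/
theorem stmt_0 {H : Type*} [NormedAddCommGroup H] [InnerProductSpace ℂ H] [CompleteSpace H]
    (A B : H →L[ℂ] H)
    (hA : ¬ ∃ c : ℂ, A = c • (1 : H →L[ℂ] H)) :
    (∀ v : H, v ≠ 0 → ¬ (∃ lam : ℂ, A v = lam • v) → ∃ mu : ℂ, B v = mu • v) ↔
      (∃ c : ℂ, B = c • (1 : H →L[ℂ] H)) := by
  constructor
  · intro h
    apply scalar_of_all_eig
    intro v hv
    by_cases hvA : ∃ lam : ℂ, A v = lam • v
    swap
    · exact h v hv hvA
    obtain ⟨lam, hlam⟩ := hvA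
    have hex : ¬ ∀ u : H, A u = lam • u := by
      intro hall
      exact hA ⟨lam, by ext x; simpa using hall x⟩
    push_neg at hex
    obtain ⟨u, hu⟩ := hex
    have hu0 : u ≠ 0 := by rintro rfl; simp at hu
    -- v and u are linearly independent
    have hindep : ∀ a b : ℂ, a • v + b • u = 0 → a = 0 ∧ b = 0 := by
      intro a b hab
      by_cases hb : b = 0
      · subst hb
        rw [zero_smul, add_zero] at hab
        rcases smul_eq_zero.mp hab with h' | h'
        · exact ⟨h', rfl⟩
        · exact absurd h' hv
      · exfalso
        apply hu
        have huv : u = (-(b⁻¹ * a)) • v := by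
          have h3 : b • u = (-a) • v := by linear_combination (norm := module) hab
          rw [← inv_smul_smul₀ hb u, h3, smul_smul]
          congr 1
          ring
        rw [huv, map_smul, hlam, smul_comm, ← huv]
    have hcmp : ∀ a b a' b' : ℂ, a • v + b • u = a' • v + b' • u → a = a' ∧ b = b' := by
      intro a b a' b' habe
      have := hindep (a - a') (b - b')
        (by linear_combination (norm := module) habe)
      exact ⟨by linear_combination this.1, by linear_combination this.2⟩
    have hne : ∀ a b : ℂ, a ≠ 0 → a • v + b • u ≠ 0 := by
      intro a b ha hz
      exact ha (hindep a b hz).1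
    by_cases huA : ∃ ν : ℂ, A u = ν • u
    · -- u is an eigenvector of A with eigenvalue ν ≠ lam
      obtain ⟨ν, hν⟩ := huA
      have hνlam : ν ≠ lam := by
        rintro rfl; exact hu hν
      have good : ∀ t : ℂ, t ≠ 0 → ¬ ∃ a : ℂ, A (v + t • u) = a • (v + t • u) := by
        rintro t ht ⟨a, ha⟩
        rw [map_add, map_smul, hlam, hν] at ha
        have ha' : lam • v + (t * ν) • u = a • v + (a * t) • u := by
          linear_combination (norm := module) ha
        obtain ⟨h1, h2⟩ := hcmp _ _ _ _ ha'
        apply hνlam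
        have : t * (ν - lam) = 0 := by linear_combination h2 - t * h1
        rcases mul_eq_zero.mp this with h' | h'
        · exact absurd h' ht
        · linear_combination h'
      have nz1 : v + u ≠ 0 := by
        have := hne 1 1 one_ne_zero; simpa using this
      have nz2 : v + (2:ℂ) • u ≠ 0 := by
        have := hne 1 2 one_ne_zero; simpa using this
      have nz3 : v + (3:ℂ) • u ≠ 0 := by
        have := hne 1 3 one_ne_zero; simpa using this
      obtain ⟨c₁, hc₁⟩ := h (v + u) nz1 (by simpa using good 1 one_ne_zero)
      obtain ⟨c₂, hc₂⟩ := h (v + (2:ℂ) • u) nz2 (good 2 two_ne_zero)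
      obtain ⟨c₃, hc₃⟩ := h (v + (3:ℂ) • u) nz3 (good 3 three_ne_zero)
      rw [map_add] at hc₁ hc₂ hc₃
      rw [map_smul] at hc₂ hc₃
      have hBu1 : B u = (c₂ - c₁) • v + (2 * c₂ - c₁) • u := by
        linear_combination (norm := module) hc₂ - hc₁
      have hBu2 : B u = (c₃ - c₂) • v + (3 * c₃ - 2 * c₂) • u := by
        linear_combination (norm := module) hc₃ - hc₂
      obtain ⟨h1, h2⟩ := hcmp _ _ _ _ (hBu1.symm.trans hBu2)
      have hc12 : c₂ = c₁ := by linear_combination (3*h1 - h2)/2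
      refine ⟨c₁, ?_⟩
      have hBu : B u = c₁ • u := by
        rw [hBu1, hc12]; module
      linear_combination (norm := module) hc₁ - hBu
    · -- u is not an eigenvector of A
      obtain ⟨μ, hμ⟩ := h u hu0 huA
      have key : ∀ s t a b : ℂ, s ≠ 0 → t ≠ 0 → s ≠ t →
          A (v + s • u) = a • (v + s • u) → A (v + t • u) = b • (v + t • u) → False := by
        intro s t a b hs ht hst ha hb
        rw [map_add, map_smul, hlam] at ha hb
        have ha' : (t * lam) • v + (t * s) • A u = (t * a) • v + (t * a * s) • u := by
          linear_combination (norm := module) t • ha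
        have hb' : (s * lam) • v + (s * t) • A u = (s * b) • v + (s * b * t) • u := by
          linear_combination (norm := module) s • hb
        have hab : (t * lam - t * a + s * b - s * lam) • v +
            (s * b * t - t * a * s) • u = 0 := by
          linear_combination (norm := module) ha' - hb'
        obtain ⟨h1, h2⟩ := hindep _ _ hab
        have hab2 : a = b := by
          have : s * t * (b - a) = 0 := by linear_combination h2
          rcases mul_eq_zero.mp this with h' | h'
          · rcases mul_eq_zero.mp h' with h'' | h''
            · exact absurd h'' hs
            · exact absurd h'' ht
          · linear_combination -h'
        have halam : a = lam := by
          have : (t - s) * (lam - a) = 0 := by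
            linear_combination h1 + s * hab2
          rcases mul_eq_zero.mp this with h' | h'
          · exact absurd (by linear_combination -h' : s = t) hst
          · linear_combination -h'
        apply huA
        refine ⟨lam, ?_⟩
        have : s • A u = s • (lam • u) := by
          linear_combination (norm := module) ha + ((halam ▸ rfl : a • (v + s • u) = lam • (v + s • u)))
        exact smul_right_injective H hs this
      -- final step: from two good parameters
      have final : ∀ t₁ t₂ : ℂ, t₁ ≠ 0 → t₂ ≠ 0 → t₁ ≠ t₂ →
          (¬ ∃ a : ℂ, A (v + t₁ • u) = a • (v + t₁ • u)) →
          (¬ ∃ a : ℂ, A (v + t₂ • u) = a • (v + t₂ • u)) → ∃ μ' : ℂ, B v = μ' • v := by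
        intro t₁ t₂ ht₁ ht₂ ht12 hg₁ hg₂
        obtain ⟨c₁, hc₁⟩ := h (v + t₁ • u) (by simpa using hne 1 t₁ one_ne_zero) hg₁
        obtain ⟨c₂, hc₂⟩ := h (v + t₂ • u) (by simpa using hne 1 t₂ one_ne_zero) hg₂
        rw [map_add, map_smul, hμ] at hc₁ hc₂
        have hBv1 : B v = c₁ • v + (c₁ * t₁ - t₁ * μ) • u := by
          linear_combination (norm := module) hc₁
        have hBv2 : B v = c₂ • v + (c₂ * t₂ - t₂ * μ) • u := by
          linear_combination (norm := module) hc₂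
        obtain ⟨h1, h2⟩ := hcmp _ _ _ _ (hBv1.symm.trans hBv2)
        have hcμ : c₁ = μ := by
          have : (t₁ - t₂) * (c₁ - μ) = 0 := by linear_combination h2 - t₂ * h1
          rcases mul_eq_zero.mp this with h' | h'
          · exact absurd (by linear_combination h' : t₁ = t₂) ht12
          · linear_combination h'
        refine ⟨μ, ?_⟩
        rw [hBv1, hcμ]
        module
      by_cases e1 : ∃ a : ℂ, A (v + u) = a • (v + u)
      · -- then t = 2, 3 are good
        have g2 : ¬ ∃ a : ℂ, A (v + (2:ℂ) • u) = a • (v + (2:ℂ) • u) := by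
          rintro ⟨b, hb⟩
          obtain ⟨a, ha⟩ := e1
          exact key 1 2 a b one_ne_zero two_ne_zero (by norm_num) (by simpa using ha) hb
        have g3 : ¬ ∃ a : ℂ, A (v + (3:ℂ) • u) = a • (v + (3:ℂ) • u) := by
          rintro ⟨b, hb⟩
          obtain ⟨a, ha⟩ := e1
          exact key 1 3 a b one_ne_zero three_ne_zero (by norm_num) (by simpa using ha) hb
        exact final 2 3 two_ne_zero three_ne_zero (by norm_num) g2 g3
      · by_cases e2 : ∃ a : ℂ, A (v + (2:ℂ) • u) = a • (v + (2:ℂ) • u)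
        · have g3 : ¬ ∃ a : ℂ, A (v + (3:ℂ) • u) = a • (v + (3:ℂ) • u) := by
            rintro ⟨b, hb⟩
            obtain ⟨a, ha⟩ := e2
            exact key 2 3 a b two_ne_zero three_ne_zero (by norm_num) ha hb
          exact final 1 3 one_ne_zero three_ne_zero (by norm_num)
            (by simpa using e1) g3
        · exact final 1 2 one_ne_zero two_ne_zero (by norm_num)
            (by simpa using e1) e2
  · rintro ⟨c, rfl⟩ v hv hvA
    exact ⟨c, by simp⟩
end

section
/- Let H be a complex Hilbert space, A a bounded linear operator on H, a ∈ H a nonzero eigenvector of A, and v ∈ H a nonzero vector that is not an eigenvector of A. Then there exists at most one nonzero scalar ε ∈ ℂ such that a + ε v is an eigenvector of A. -/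
/-- Key step of Lemma 1: if `a` is a nonzero eigenvector of the bounded operator `A` and
`v` is a nonzero vector that is not an eigenvector of `A`, then there is at most one
nonzero scalar `ε` such that `a + ε v` is an eigenvector of `A`. -/
theorem stmt_1 {H : Type*} [NormedAddCommGroup H] [InnerProductSpace ℂ H] [CompleteSpace H]
    (A : H →L[ℂ] H) (a v : H)
    (ha : a ≠ 0) (haeig : ∃ lam : ℂ, A a = lam • a)
    (hv : v ≠ 0) (hveig : ¬ ∃ lam : ℂ, A v = lam • v) :
    ∀ ε₁ ε₂ : ℂ, ε₁ ≠ 0 → ε₂ ≠ 0 →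
      (a + ε₁ • v ≠ 0 ∧ ∃ lam : ℂ, A (a + ε₁ • v) = lam • (a + ε₁ • v)) →
      (a + ε₂ • v ≠ 0 ∧ ∃ lam : ℂ, A (a + ε₂ • v) = lam • (a + ε₂ • v)) →
      ε₁ = ε₂ := by
  obtain ⟨lam, hlam⟩ := haeig
  rintro ε₁ ε₂ h1 h2 ⟨-, μ₁, hμ₁⟩ ⟨-, μ₂, hμ₂⟩
  -- the pair (a, v) is linearly independent
  have hind : ∀ c d : ℂ, c • a + d • v = 0 → c = 0 ∧ d = 0 := by
    intro c d h
    have hd : d = 0 := by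
      by_contra hd
      apply hveig
      have hvca : v = (-(d⁻¹ * c)) • a := by
        have h' : d • v = (-c) • a := by
          rw [neg_smul]
          rw [add_comm] at h
          exact eq_neg_of_add_eq_zero_left h
        have := congrArg (fun x => d⁻¹ • x) h'
        simpa [smul_smul, inv_mul_cancel₀ hd, mul_comm, neg_smul] using this
      exact ⟨lam, by rw [hvca, map_smul, hlam, smul_smul, smul_smul, mul_comm]⟩
    refine ⟨?_, hd⟩
    rw [hd, zero_smul, add_zero] at h
    exact (smul_eq_zero.mp h).resolve_right ha
  -- express A v from each equation
  rw [map_add, map_smul, hlam] at hμ₁ hμ₂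
  have hv1 : A v = (ε₁⁻¹ * (μ₁ - lam)) • a + μ₁ • v := by
    have key : ε₁ • A v = (μ₁ - lam) • a + (μ₁ * ε₁) • v := by
      have := hμ₁
      rw [smul_add, smul_smul] at this
      linear_combination (norm := module) this
    have := congrArg (fun x => ε₁⁻¹ • x) key
    simpa [smul_smul, inv_mul_cancel₀ h1, mul_assoc, mul_comm μ₁ ε₁,
      inv_mul_cancel_left₀ h1] using this
  have hv2 : A v = (ε₂⁻¹ * (μ₂ - lam)) • a + μ₂ • v := by
    have key : ε₂ • A v = (μ₂ - lam) • a + (μ₂ * ε₂) • v := by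
      have := hμ₂
      rw [smul_add, smul_smul] at this
      linear_combination (norm := module) this
    have := congrArg (fun x => ε₂⁻¹ • x) key
    simpa [smul_smul, inv_mul_cancel₀ h2, mul_assoc, mul_comm μ₂ ε₂,
      inv_mul_cancel_left₀ h2] using this
  have hrel : (ε₁⁻¹ * (μ₁ - lam) - ε₂⁻¹ * (μ₂ - lam)) • a + (μ₁ - μ₂) • v = 0 := by
    rw [sub_smul, sub_smul]
    have := hv1.symm.trans hv2
    linear_combination (norm := module) this
  obtain ⟨hc, hdμ⟩ := hind _ _ hrel
  have hμeq : μ₁ = μ₂ := sub_eq_zero.mp hdμ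
  have hμlam : μ₁ ≠ lam := by
    intro h
    apply hveig
    refine ⟨μ₁, ?_⟩
    rw [hv1, h, sub_self, mul_zero, zero_smul, zero_add, ← h]
  have hcoef : ε₁⁻¹ * (μ₁ - lam) = ε₂⁻¹ * (μ₂ - lam) := sub_eq_zero.mp hc
  rw [← hμeq] at hcoef
  have hml : μ₁ - lam ≠ 0 := sub_ne_zero.mpr hμlam
  have : ε₁⁻¹ = ε₂⁻¹ := mul_right_cancel₀ hml hcoef
  exact inv_injective this
end

section
/- Let H be a complex Hilbert space of dimension at least 2 and let A and B be bounded linear operators on H, neither of which is a scalar multiple of the identity operator. Then there exist vectors e₁, e₂ ∈ H with ‖e₁‖ = ‖e₂‖ = 1 and ⟨e₁, e₂⟩ = 0 such that ⟨e₂, A e₁⟩ ≠ 0 and ⟨e₂, B e₁⟩ ≠ 0. -/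
lemma aux_indep {H : Type*} [AddCommGroup H] [Module ℂ H] {x y : H}
    (hx : x ≠ 0) (hy : ∀ lam : ℂ, y ≠ lam • x) {a b : ℂ}
    (hab : a • x + b • y = 0) : a = 0 ∧ b = 0 := by
  have hb : b = 0 := by
    by_contra hb
    apply hy (-a/b)
    apply smul_right_injective H hb
    show b • y = b • ((-a / b) • x)
    rw [smul_smul]
    have : b * (-a / b) = -a := by field_simp
    rw [this]
    linear_combination (norm := module) hab
  refine ⟨?_, hb⟩
  rw [hb, zero_smul, add_zero, smul_eq_zero] at hab
  exact hab.resolve_right hx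

lemma aux_eigen {H : Type*} [NormedAddCommGroup H] [InnerProductSpace ℂ H]
    (A : H →L[ℂ] H) (hA : ¬ ∃ c : ℂ, A = c • (1 : H →L[ℂ] H)) :
    ∃ x : H, ∀ c : ℂ, A x ≠ c • x := by
  by_contra h
  push_neg at h
  apply hA
  rcases subsingleton_or_nontrivial H with hs | hs
  · exact ⟨0, by ext y; simp [Subsingleton.elim y 0]⟩
  · obtain ⟨x₀, hx₀⟩ := exists_ne (0 : H)
    obtain ⟨c₀, hc₀⟩ := h x₀
    refine ⟨c₀, ?_⟩
    ext y
    simp only [ContinuousLinearMap.smul_apply, ContinuousLinearMap.one_apply]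
    by_cases hy : ∃ lam : ℂ, y = lam • x₀
    · obtain ⟨lam, rfl⟩ := hy
      rw [map_smul, hc₀, smul_smul, smul_smul, mul_comm]
    · push_neg at hy
      obtain ⟨c₁, hc₁⟩ := h y
      obtain ⟨c, hc⟩ := h (x₀ + y)
      rw [map_add, hc₀, hc₁, smul_add] at hc
      have key : (c₀ - c) • x₀ + (c₁ - c) • y = 0 := by
        linear_combination (norm := module) hc
      obtain ⟨h1, h2⟩ := aux_indep hx₀ hy key
      rw [hc₁, sub_eq_zero.mp h2, ← sub_eq_zero.mp h1]

lemma aux_common {H : Type*} [NormedAddCommGroup H] [InnerProductSpace ℂ H]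
    (A B : H →L[ℂ] H) (hA : ¬ ∃ c : ℂ, A = c • (1 : H →L[ℂ] H))
    (hB : ¬ ∃ c : ℂ, B = c • (1 : H →L[ℂ] H)) :
    ∃ z : H, (∀ c : ℂ, A z ≠ c • z) ∧ (∀ c : ℂ, B z ≠ c • z) := by
  by_contra h
  push_neg at h
  obtain ⟨x, hx⟩ := aux_eigen A hA
  obtain ⟨y, hy⟩ := aux_eigen B hB
  obtain ⟨b, hb⟩ := h x hx
  have hay : ∃ a : ℂ, A y = a • y := by
    by_contra ha; push_neg at ha
    obtain ⟨c, hc⟩ := h y ha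
    exact hy c hc
  obtain ⟨a, ha⟩ := hay
  have hx0 : x ≠ 0 := by
    rintro rfl; exact hx 0 (by simp)
  have hy0 : y ≠ 0 := by
    rintro rfl; exact hy 0 (by simp)
  have hxy : ∀ lam : ℂ, y ≠ lam • x := by
    intro lam hlam
    have hl0 : lam ≠ 0 := by rintro rfl; rw [zero_smul] at hlam; exact hy0 hlam
    apply hy b
    rw [hlam, map_smul, hb, smul_smul, smul_smul, mul_comm]
  have step : ∀ t : ℂ, t ≠ 0 →
      (∃ c : ℂ, A x = c • x + (t * (c - a)) • y) ∨
      (∃ c : ℂ, B y = ((c - b) / t) • x + c • y) := by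
    intro t ht
    by_cases hAz : ∃ c : ℂ, A (x + t • y) = c • (x + t • y)
    · left
      obtain ⟨c, hc⟩ := hAz
      rw [map_add, map_smul, ha] at hc
      exact ⟨c, by linear_combination (norm := module) hc⟩
    · push_neg at hAz
      obtain ⟨c, hc⟩ := h _ hAz
      rw [map_add, map_smul, hb] at hc
      right
      refine ⟨c, ?_⟩
      apply smul_right_injective H ht
      show t • B y = t • (((c - b) / t) • x + c • y)
      have h3 : t * ((c - b) / t) = c - b := by field_simp
      rw [smul_add, smul_smul, h3]
      linear_combination (norm := module) hc
  have twoA : ∀ t₁ t₂ : ℂ, t₁ ≠ t₂ →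
      (∃ c : ℂ, A x = c • x + (t₁ * (c - a)) • y) →
      (∃ c : ℂ, A x = c • x + (t₂ * (c - a)) • y) → False := by
    rintro t₁ t₂ hne ⟨c₁, h1⟩ ⟨c₂, h2⟩
    have key : (c₁ - c₂) • x + (t₁ * (c₁ - a) - t₂ * (c₂ - a)) • y = 0 := by
      linear_combination (norm := module) h2 - h1
    obtain ⟨e1, e2⟩ := aux_indep hx0 hxy key
    have hc : c₁ = c₂ := sub_eq_zero.mp e1
    have h4 : (t₁ - t₂) * (c₂ - a) = 0 := by
      rw [hc] at e2; linear_combination e2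
    rcases mul_eq_zero.mp h4 with h5 | h5
    · exact hne (sub_eq_zero.mp h5)
    · apply hx c₁
      rw [h1, hc, h5, mul_zero, zero_smul, add_zero]
  have twoB : ∀ t₁ t₂ : ℂ, t₁ ≠ 0 → t₂ ≠ 0 → t₁ ≠ t₂ →
      (∃ c : ℂ, B y = ((c - b) / t₁) • x + c • y) →
      (∃ c : ℂ, B y = ((c - b) / t₂) • x + c • y) → False := by
    rintro t₁ t₂ ht₁ ht₂ hne ⟨c₁, h1⟩ ⟨c₂, h2⟩
    have key : ((c₁ - b) / t₁ - (c₂ - b) / t₂) • x + (c₁ - c₂) • y = 0 := by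
      linear_combination (norm := module) h2 - h1
    obtain ⟨e1, e2⟩ := aux_indep hx0 hxy key
    have hc : c₁ = c₂ := sub_eq_zero.mp e2
    rw [hc, div_sub_div _ _ ht₁ ht₂, div_eq_zero_iff] at e1
    rcases e1 with e1 | e1
    · have h4 : (c₂ - b) * (t₂ - t₁) = 0 := by linear_combination e1
      rcases mul_eq_zero.mp h4 with h5 | h5
      · apply hy c₁
        rw [h1, hc, sub_eq_zero.mp h5, sub_self, zero_div, zero_smul, zero_add]
      · exact hne (sub_eq_zero.mp h5).symm
    · exact absurd (mul_eq_zero.mp e1) (by push_neg; exact ⟨ht₁, ht₂⟩)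
  rcases step 1 one_ne_zero with h1 | h1 <;>
    rcases step 2 two_ne_zero with h2 | h2 <;>
      rcases step 3 three_ne_zero with h3 | h3
  · exact twoA 1 2 (by norm_num) h1 h2
  · exact twoA 1 2 (by norm_num) h1 h2
  · exact twoA 1 3 (by norm_num) h1 h3
  · exact twoB 2 3 two_ne_zero three_ne_zero (by norm_num) h2 h3
  · exact twoA 2 3 (by norm_num) h2 h3
  · exact twoB 1 3 one_ne_zero three_ne_zero (by norm_num) h1 h3
  · exact twoB 1 2 one_ne_zero two_ne_zero (by norm_num) h1 h2
  · exact twoB 1 2 one_ne_zero two_ne_zero (by norm_num) h1 h2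


/-- Lemma 2: Let `H` be a complex Hilbert space of dimension at least 2 and `A`, `B`
bounded linear operators on `H`, neither of which is a scalar multiple of the identity.
Then there exists an orthonormal system `{e₁, e₂}` such that `⟨e₂, A e₁⟩ ≠ 0` and
`⟨e₂, B e₁⟩ ≠ 0`. -/
theorem stmt_2 {H : Type*} [NormedAddCommGroup H] [InnerProductSpace ℂ H] [CompleteSpace H]
    (hdim : 2 ≤ Module.rank ℂ H)
    (A B : H →L[ℂ] H)
    (hA : ¬ ∃ c : ℂ, A = c • (1 : H →L[ℂ] H))
    (hB : ¬ ∃ c : ℂ, B = c • (1 : H →L[ℂ] H)) :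
    ∃ e₁ e₂ : H, ‖e₁‖ = 1 ∧ ‖e₂‖ = 1 ∧ (inner ℂ e₁ e₂ : ℂ) = 0 ∧
      (inner ℂ e₂ (A e₁) : ℂ) ≠ 0 ∧ (inner ℂ e₂ (B e₁) : ℂ) ≠ 0 := by
  obtain ⟨z, hAz, hBz⟩ := aux_common A B hA hB
  have hz0 : z ≠ 0 := by rintro rfl; exact hAz 0 (by simp)
  have hzn : ((‖z‖ : ℂ)) ≠ 0 := by
    simpa using norm_ne_zero_iff.mpr hz0
  set e₁ : H := ((‖z‖ : ℂ))⁻¹ • z with he₁_def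
  have he₁ : ‖e₁‖ = 1 := by
    rw [he₁_def, norm_smul, norm_inv]
    simp [norm_ne_zero_iff.mpr hz0]
  have hAe : ∀ c : ℂ, A e₁ ≠ c • e₁ := by
    intro c hc
    apply hAz c
    rw [he₁_def, map_smul] at hc
    apply smul_right_injective H (inv_ne_zero hzn)
    show ((‖z‖ : ℂ))⁻¹ • A z = ((‖z‖ : ℂ))⁻¹ • (c • z)
    rw [hc, smul_smul, smul_smul, mul_comm]
  have hBe : ∀ c : ℂ, B e₁ ≠ c • e₁ := by
    intro c hc
    apply hBz c
    rw [he₁_def, map_smul] at hc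
    apply smul_right_injective H (inv_ne_zero hzn)
    show ((‖z‖ : ℂ))⁻¹ • B z = ((‖z‖ : ℂ))⁻¹ • (c • z)
    rw [hc, smul_smul, smul_smul, mul_comm]
  have hee : (inner ℂ e₁ e₁ : ℂ) = 1 := by
    rw [inner_self_eq_norm_sq_to_K, he₁]; norm_num
  set u : H := A e₁ - (inner ℂ e₁ (A e₁) : ℂ) • e₁ with hu_def
  set v : H := B e₁ - (inner ℂ e₁ (B e₁) : ℂ) • e₁ with hv_def
  have hu0 : u ≠ 0 := by
    intro h0
    exact hAe _ (by rwa [hu_def, sub_eq_zero] at h0)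
  have hv0 : v ≠ 0 := by
    intro h0
    exact hBe _ (by rwa [hv_def, sub_eq_zero] at h0)
  have hu_orth : (inner ℂ e₁ u : ℂ) = 0 := by
    rw [hu_def, inner_sub_right, inner_smul_right, hee, mul_one, sub_self]
  have hv_orth : (inner ℂ e₁ v : ℂ) = 0 := by
    rw [hv_def, inner_sub_right, inner_smul_right, hee, mul_one, sub_self]
  have hAdec : A e₁ = u + (inner ℂ e₁ (A e₁) : ℂ) • e₁ := by rw [hu_def]; abel
  have hBdec : B e₁ = v + (inner ℂ e₁ (B e₁) : ℂ) • e₁ := by rw [hv_def]; abel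
  have main : ∀ w : H, (inner ℂ e₁ w : ℂ) = 0 → (inner ℂ w u : ℂ) ≠ 0 → (inner ℂ w v : ℂ) ≠ 0 →
      ∃ e₂ : H, ‖e₂‖ = 1 ∧ (inner ℂ e₁ e₂ : ℂ) = 0 ∧
        (inner ℂ e₂ (A e₁) : ℂ) ≠ 0 ∧ (inner ℂ e₂ (B e₁) : ℂ) ≠ 0 := by
    intro w hw1 hwu hwv
    have hw : w ≠ 0 := by rintro rfl; exact hwu (inner_zero_left _)
    have hwn : ((‖w‖ : ℂ)) ≠ 0 := by simpa using norm_ne_zero_iff.mpr hw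
    have hconj : (starRingEnd ℂ) ((‖w‖ : ℂ))⁻¹ ≠ 0 := by
      simpa using inv_ne_zero hwn
    refine ⟨((‖w‖ : ℂ))⁻¹ • w, ?_, ?_, ?_, ?_⟩
    · rw [norm_smul, norm_inv]
      simp [norm_ne_zero_iff.mpr hw]
    · rw [inner_smul_right, hw1, mul_zero]
    · have he2e1 : (inner ℂ (((‖w‖ : ℂ))⁻¹ • w) e₁ : ℂ) = 0 := by
        rw [inner_smul_left, ← inner_conj_symm w e₁, hw1, map_zero, mul_zero]
      rw [hAdec, inner_add_right, inner_smul_right, he2e1, mul_zero, add_zero,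
        inner_smul_left]
      exact mul_ne_zero hconj hwu
    · have he2e1 : (inner ℂ (((‖w‖ : ℂ))⁻¹ • w) e₁ : ℂ) = 0 := by
        rw [inner_smul_left, ← inner_conj_symm w e₁, hw1, map_zero, mul_zero]
      rw [hBdec, inner_add_right, inner_smul_right, he2e1, mul_zero, add_zero,
        inner_smul_left]
      exact mul_ne_zero hconj hwv
  by_cases huv : (inner ℂ u v : ℂ) = 0
  · obtain ⟨e₂, h1, h2, h3, h4⟩ := main (u + v)
      (by rw [inner_add_right, hu_orth, hv_orth, add_zero])
      (by rw [inner_add_left, ← inner_conj_symm v u, huv, map_zero, add_zero]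
          exact inner_self_ne_zero.mpr hu0)
      (by rw [inner_add_left, huv, zero_add]
          exact inner_self_ne_zero.mpr hv0)
    exact ⟨e₁, e₂, he₁, h1, h2, h3, h4⟩
  · obtain ⟨e₂, h1, h2, h3, h4⟩ := main u hu_orth (inner_self_ne_zero.mpr hu0) huv
    exact ⟨e₁, e₂, he₁, h1, h2, h3, h4⟩
end

section
/- Let D ≥ 2, let A and B be Hermitian D×D complex matrices, and let r be a nonzero real number. Then Tr(U* A U B) = r holds for every unitary D×D matrix U if and only if there exists a nonzero real number a such that either A = a·1 and Tr(B) = r/a, or B = a·1 and Tr(A) = r/a, where 1 denotes the identity matrix. -/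
open Matrix

noncomputable section
namespace Stmt4Aux


variable {D : ℕ}

/-- quadratic form -/
def qf (M : Matrix (Fin D) (Fin D) ℂ) (x : Fin D → ℂ) : ℂ := star x ⬝ᵥ (M *ᵥ x)

/-- matrix whose columns are the basis vectors -/
def bMat (b : OrthonormalBasis (Fin D) ℂ (EuclideanSpace ℂ (Fin D))) :
    Matrix (Fin D) (Fin D) ℂ := Matrix.of fun m k => b k m

lemma bMat_unitary (b : OrthonormalBasis (Fin D) ℂ (EuclideanSpace ℂ (Fin D))) :
    (bMat b)ᴴ * bMat b = 1 := by
  ext k l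
  have h := (orthonormal_iff_ite.mp b.orthonormal) k l
  rw [PiLp.inner_apply] at h
  simp only [bMat, Matrix.mul_apply, Matrix.conjTranspose_apply, Matrix.of_apply,
    Matrix.one_apply]
  simpa [RCLike.inner_apply, mul_comm] using h

lemma conj_diag (b : OrthonormalBasis (Fin D) ℂ (EuclideanSpace ℂ (Fin D)))
    (M : Matrix (Fin D) (Fin D) ℂ) (k : Fin D) :
    ((bMat b)ᴴ * M * bMat b) k k = qf M (b k) := by
  simp only [qf, Matrix.mul_apply, Matrix.conjTranspose_apply, bMat, Matrix.of_apply,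
    dotProduct, mulVec, Finset.sum_mul, Finset.mul_sum, Pi.star_apply]
  rw [Finset.sum_comm]
  refine Finset.sum_congr rfl fun m _ => Finset.sum_congr rfl fun n _ => by ring



lemma bMat_unitary' (b : OrthonormalBasis (Fin D) ℂ (EuclideanSpace ℂ (Fin D))) :
    bMat b * (bMat b)ᴴ = 1 := mul_eq_one_comm.mp (bMat_unitary b)

lemma sum_qf (b : OrthonormalBasis (Fin D) ℂ (EuclideanSpace ℂ (Fin D)))
    (M : Matrix (Fin D) (Fin D) ℂ) : ∑ k, qf M (b k) = M.trace := by
  have h1 : ((bMat b)ᴴ * M * bMat b).trace = M.trace := by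
    rw [Matrix.trace_mul_cycle, bMat_unitary', one_mul]
  rw [← h1, Matrix.trace]
  exact Finset.sum_congr rfl fun k _ => (conj_diag b M k).symm

lemma key_sum (b : OrthonormalBasis (Fin D) ℂ (EuclideanSpace ℂ (Fin D)))
    (d : Fin D → ℂ) (B : Matrix (Fin D) (Fin D) ℂ) :
    (bMat b * Matrix.diagonal d * (bMat b)ᴴ * B).trace
      = ∑ k, d k * qf B (b k) := by
  have : bMat b * Matrix.diagonal d * (bMat b)ᴴ * B
      = bMat b * (Matrix.diagonal d * ((bMat b)ᴴ * B)) := by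
    simp [mul_assoc]
  rw [this, Matrix.trace_mul_comm]
  have h3 : Matrix.diagonal d * ((bMat b)ᴴ * B) * bMat b
      = Matrix.diagonal d * ((bMat b)ᴴ * B * bMat b) := by simp [mul_assoc]
  rw [h3, Matrix.trace]
  refine Finset.sum_congr rfl fun k _ => ?_
  have h2 : (Matrix.diagonal d * ((bMat b)ᴴ * B * bMat b)).diag k
      = d k * ((bMat b)ᴴ * B * bMat b) k k := by
    simp [Matrix.diag, Matrix.diagonal_mul]
  rw [h2, conj_diag b B k]


lemma step2 {A B : Matrix (Fin D) (Fin D) ℂ} (hA : A.IsHermitian) {r : ℂ}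
    (H : ∀ U : Matrix (Fin D) (Fin D) ℂ, Uᴴ * U = 1 → (Uᴴ * A * U * B).trace = r)
    (b : OrthonormalBasis (Fin D) ℂ (EuclideanSpace ℂ (Fin D))) :
    ∑ k, (hA.eigenvalues k : ℂ) * qf B (b k) = r := by
  set W : Matrix (Fin D) (Fin D) ℂ := ↑(hA.eigenvectorUnitary) with hW
  have hW1 : Wᴴ * W = 1 := by
    rw [← Matrix.star_eq_conjTranspose]
    exact Matrix.mem_unitaryGroup_iff'.mp hA.eigenvectorUnitary.2
  have hW2 : W * Wᴴ = 1 := mul_eq_one_comm.mp hW1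
  set X : Matrix (Fin D) (Fin D) ℂ := bMat b with hX
  set U : Matrix (Fin D) (Fin D) ℂ := W * Xᴴ with hU
  have hUu : Uᴴ * U = 1 := by
    rw [hU, Matrix.conjTranspose_mul, Matrix.conjTranspose_conjTranspose]
    calc X * Wᴴ * (W * Xᴴ) = X * (Wᴴ * W) * Xᴴ := by simp [mul_assoc]
    _ = 1 := by rw [hW1, mul_one, bMat_unitary']
  have hdiag : Wᴴ * A * W = Matrix.diagonal (fun k => (hA.eigenvalues k : ℂ)) := by
    conv_lhs => rw [hA.spectral_theorem]
    rw [Unitary.conjStarAlgAut_apply, Matrix.star_eq_conjTranspose]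
    calc Wᴴ * (W * Matrix.diagonal (RCLike.ofReal ∘ hA.eigenvalues) * Wᴴ) * W
        = (Wᴴ * W) * Matrix.diagonal (RCLike.ofReal ∘ hA.eigenvalues) * (Wᴴ * W) := by
          simp [mul_assoc]
      _ = Matrix.diagonal (fun k => (hA.eigenvalues k : ℂ)) := by
          rw [hW1, one_mul, mul_one]; rfl
  have := H U hUu
  rw [hU, Matrix.conjTranspose_mul, Matrix.conjTranspose_conjTranspose] at this
  have hrw : X * Wᴴ * A * (W * Xᴴ) * B
      = X * Matrix.diagonal (fun k => (hA.eigenvalues k : ℂ)) * Xᴴ * B := by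
    rw [← hdiag]; simp [mul_assoc]
  rw [hrw, key_sum] at this
  exact this


-- step3: from the constant-sum property, diagonal entries i j are equal
lemma step3 {B : Matrix (Fin D) (Fin D) ℂ} {d : Fin D → ℂ} {r : ℂ}
    (H : ∀ b : OrthonormalBasis (Fin D) ℂ (EuclideanSpace ℂ (Fin D)),
      ∑ k, d k * qf B (b k) = r)
    {i j : Fin D} (hij : i ≠ j) (hd : d i ≠ d j)
    (b : OrthonormalBasis (Fin D) ℂ (EuclideanSpace ℂ (Fin D))) :
    qf B (b i) = qf B (b j) := by
  have h1 := H b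
  have h2 := H (b.reindex (Equiv.swap i j))
  have hre : ∀ k, (b.reindex (Equiv.swap i j)) k = b (Equiv.swap i j k) := by
    intro k; rw [OrthonormalBasis.reindex_apply, Equiv.symm_swap]
  simp only [hre] at h2
  have h3 : ∑ k, (d k * qf B (b (Equiv.swap i j k)) - d k * qf B (b k)) = 0 := by
    rw [Finset.sum_sub_distrib, h1, h2, sub_self]
  have h4 : ∑ k ∈ ({i, j} : Finset (Fin D)),
      (d k * qf B (b (Equiv.swap i j k)) - d k * qf B (b k)) = 0 := by
    rw [← h3]
    exact Finset.sum_subset (Finset.subset_univ _) (by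
      intro k _ hk
      simp only [Finset.mem_insert, Finset.mem_singleton, not_or] at hk
      rw [Equiv.swap_apply_of_ne_of_ne hk.1 hk.2, sub_self])
  rw [Finset.sum_pair hij, Equiv.swap_apply_left, Equiv.swap_apply_right] at h4
  have h5 : (d i - d j) * (qf B (b j) - qf B (b i)) = 0 := by ring_nf; linear_combination h4
  rcases mul_eq_zero.mp h5 with h | h
  · exact absurd (sub_eq_zero.mp h) hd
  · exact (sub_eq_zero.mp h).symm

-- step4: all diagonal entries equal, for every orthonormal basis
lemma step4 {B : Matrix (Fin D) (Fin D) ℂ} {d : Fin D → ℂ} {r : ℂ}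
    (H : ∀ b : OrthonormalBasis (Fin D) ℂ (EuclideanSpace ℂ (Fin D)),
      ∑ k, d k * qf B (b k) = r)
    {i j : Fin D} (hij : i ≠ j) (hd : d i ≠ d j)
    (b : OrthonormalBasis (Fin D) ℂ (EuclideanSpace ℂ (Fin D))) (k l : Fin D) :
    qf B (b k) = qf B (b l) := by
  rcases eq_or_ne k l with h | hkl
  · rw [h]
  · set σ₁ := Equiv.swap i k with hσ₁
    set σ₂ := Equiv.swap (σ₁ j) l with hσ₂
    set σ := σ₁.trans σ₂ with hσ
    have hσi : σ i = k := by
      rw [hσ, Equiv.trans_apply, Equiv.swap_apply_left, hσ₂]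
      refine Equiv.swap_apply_of_ne_of_ne ?_ hkl
      intro hc; exact hij (σ₁.injective (by rw [Equiv.swap_apply_left, hc])).symm
    have hσj : σ j = l := by
      rw [hσ, Equiv.trans_apply, hσ₂, Equiv.swap_apply_left]
    have := step3 H hij hd (b.reindex σ.symm)
    rw [OrthonormalBasis.reindex_apply, OrthonormalBasis.reindex_apply,
      Equiv.symm_symm, hσi, hσj] at this
    exact this


lemma qf_unit {B : Matrix (Fin D) (Fin D) ℂ} (hD : 0 < D)
    (H : ∀ b : OrthonormalBasis (Fin D) ℂ (EuclideanSpace ℂ (Fin D)),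
      ∀ k l, qf B (b k) = qf B (b l))
    (u : EuclideanSpace ℂ (Fin D)) (hu : ‖u‖ = 1) :
    qf B u = B.trace / D := by
  have i0 : Fin D := ⟨0, hD⟩
  have horth : Orthonormal ℂ (({i0} : Set (Fin D)).restrict (fun _ => u)) := by
    constructor
    · intro i; exact hu
    · intro i j hij
      exact absurd (Subtype.ext (i.2.trans j.2.symm)) hij
  have hcard : Module.finrank ℂ (EuclideanSpace ℂ (Fin D)) = Fintype.card (Fin D) := by
    simp
  obtain ⟨b, hb⟩ := horth.exists_orthonormalBasis_extension_of_card_eq hcard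
  have hb0 : b i0 = u := hb i0 rfl
  have hsum := sum_qf b B
  have hall : ∀ k, qf B (b k) = qf B u := fun k => by rw [← hb0]; exact H b k i0
  rw [Finset.sum_congr rfl (fun k _ => hall k)] at hsum
  simp only [Finset.sum_const, Finset.card_univ, Fintype.card_fin, nsmul_eq_mul] at hsum
  have hD' : (D : ℂ) ≠ 0 := Nat.cast_ne_zero.mpr hD.ne'
  rw [eq_div_iff hD', mul_comm]
  exact hsum

lemma qf_smul (B : Matrix (Fin D) (Fin D) ℂ) (c : ℂ) (x : Fin D → ℂ) :
    qf B (c • x) = star c * c * qf B x := by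
  simp only [qf, dotProduct, mulVec, Pi.star_apply, Pi.smul_apply, smul_eq_mul,
    Finset.mul_sum]
  refine Finset.sum_congr rfl fun m _ => ?_
  simp only [star_mul', Finset.mul_sum]
  refine Finset.sum_congr rfl fun n _ => by ring

lemma scalar_of_qf_const {B : Matrix (Fin D) (Fin D) ℂ} (hD : 0 < D)
    (H : ∀ b : OrthonormalBasis (Fin D) ℂ (EuclideanSpace ℂ (Fin D)),
      ∀ k l, qf B (b k) = qf B (b l)) :
    B = (B.trace / D) • (1 : Matrix (Fin D) (Fin D) ℂ) := by
  have hqf0 : ∀ x : Fin D → ℂ,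
      qf (B - (B.trace / D) • 1) x = 0 := by
    intro x
    have hMx : (B - (B.trace / D) • (1 : Matrix (Fin D) (Fin D) ℂ)) *ᵥ x
        = B *ᵥ x - (B.trace / D) • x := by
      rw [Matrix.sub_mulVec, Matrix.smul_mulVec, Matrix.one_mulVec]
    have key : qf B x = (B.trace / D) * (star x ⬝ᵥ x) := by
      rcases eq_or_ne x 0 with h | h
      · simp [qf, h]
      · set X : EuclideanSpace ℂ (Fin D) := (WithLp.equiv 2 (Fin D → ℂ)).symm x with hX
        have hXne : X ≠ 0 := by
          simpa [hX] using h
        have hnx : ‖X‖ ≠ 0 := norm_ne_zero_iff.mpr hXne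
        have hnxC : ((‖X‖ : ℝ) : ℂ) ≠ 0 := by exact_mod_cast hnx
        set u : EuclideanSpace ℂ (Fin D) := ((‖X‖⁻¹ : ℝ) : ℂ) • X with hu
        have hun : ‖u‖ = 1 := by
          rw [hu, norm_smul]
          simp [hnx]
        have hqu := qf_unit hD H u hun
        have huf : (u : Fin D → ℂ) = ((‖X‖⁻¹ : ℝ) : ℂ) • x := rfl
        have hq1 : qf B u = star ((‖X‖⁻¹ : ℝ) : ℂ) * ((‖X‖⁻¹ : ℝ) : ℂ) * qf B x := by
          rw [show qf B u = qf B (((‖X‖⁻¹ : ℝ) : ℂ) • x) from rfl, qf_smul]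
        have hstar : star ((‖X‖⁻¹ : ℝ) : ℂ) = ((‖X‖⁻¹ : ℝ) : ℂ) := by
          simp [RCLike.star_def, Complex.conj_ofReal]
        rw [hstar, hqu] at hq1
        -- hq1 : B.trace / D = ‖X‖⁻¹ * ‖X‖⁻¹ * qf B x
        have hxx : star x ⬝ᵥ x = ((‖X‖ : ℝ) : ℂ) * ((‖X‖ : ℝ) : ℂ) := by
          have h1 := inner_self_eq_norm_sq_to_K (𝕜 := ℂ) X
          rw [PiLp.inner_apply] at h1
          simp only [RCLike.inner_apply] at h1
          have h2 : star x ⬝ᵥ x = ∑ i, (starRingEnd ℂ) (X i) * X i := rfl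
          have h3 : (RCLike.ofReal ‖X‖ : ℂ) = ((‖X‖ : ℝ) : ℂ) := rfl
          rw [h2, Finset.sum_congr rfl fun i _ => mul_comm ((starRingEnd ℂ) (X i)) (X i), h1, sq, h3]
        have hinv : ((‖X‖⁻¹ : ℝ) : ℂ) = (((‖X‖ : ℝ) : ℂ))⁻¹ := by push_cast; ring
        rw [hq1, hxx, hinv]
        field_simp
    rw [qf, hMx, dotProduct_sub, dotProduct_smul, ← qf, key, smul_eq_mul]
    ring
  have hT : Matrix.toEuclideanLin (B - (B.trace / D) • 1) = 0 := by
    rw [← inner_map_self_eq_zero]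
    intro x
    have h1 : (inner ℂ x (Matrix.toEuclideanLin (B - (B.trace / D) • 1) x) : ℂ)
        = qf (B - (B.trace / D) • 1) x := by
      rw [PiLp.inner_apply]
      simp only [RCLike.inner_apply']
      rfl
    have h2 : (inner ℂ (Matrix.toEuclideanLin (B - (B.trace / D) • 1) x) x : ℂ)
        = starRingEnd ℂ (inner ℂ x (Matrix.toEuclideanLin (B - (B.trace / D) • 1) x) : ℂ) := by
      rw [inner_conj_symm]
    rw [h2, h1, hqf0, map_zero]
  have hM0 : B - (B.trace / D) • 1 = 0 :=
    (Matrix.toEuclideanLin (𝕜 := ℂ) (m := Fin D) (n := Fin D)).injective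
      (by rw [hT, map_zero])
  exact sub_eq_zero.mp hM0

end Stmt4Aux
end

open Stmt4Aux in
/-- Lemma 3 of the paper (finite-dimensional case, `r ≠ 0`): for Hermitian matrices `A`, `B`,
one has `Tr(U* A U B) = r` for every unitary `U` iff `A` (or `B`) is a nonzero real scalar
multiple `a • 1` of the identity and the trace of the other operator equals `r / a`. -/
theorem stmt_4 (D : ℕ) (hD : 2 ≤ D)
    (A B : Matrix (Fin D) (Fin D) ℂ)
    (hA : A.IsHermitian) (hB : B.IsHermitian)
    (r : ℝ) (hr : r ≠ 0) :
    (∀ U : Matrix (Fin D) (Fin D) ℂ, Uᴴ * U = 1 → (Uᴴ * A * U * B).trace = (r : ℂ)) ↔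
      ∃ a : ℝ, a ≠ 0 ∧
        ((A = (a : ℂ) • (1 : Matrix (Fin D) (Fin D) ℂ) ∧ B.trace = ((r / a : ℝ) : ℂ)) ∨
         (B = (a : ℂ) • (1 : Matrix (Fin D) (Fin D) ℂ) ∧ A.trace = ((r / a : ℝ) : ℂ))) := by
  have hD0 : 0 < D := by omega
  have i0 : Fin D := ⟨0, hD0⟩
  have hrC : (r : ℂ) ≠ 0 := Complex.ofReal_ne_zero.mpr hr
  have hdiag_const : ∀ c : ℂ,
      Matrix.diagonal (fun _ : Fin D => c) = c • (1 : Matrix (Fin D) (Fin D) ℂ) := by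
    intro c; ext i j
    by_cases h : i = j <;> simp [Matrix.diagonal_apply, Matrix.one_apply, h]
  constructor
  · intro H
    have H1 := H 1 (by simp)
    rw [Matrix.conjTranspose_one, one_mul, mul_one] at H1
    by_cases hconst : ∀ i j : Fin D, hA.eigenvalues i = hA.eigenvalues j
    · -- A is a scalar matrix
      set c : ℂ := ((hA.eigenvalues i0 : ℝ) : ℂ) with hc
      have hAc : A = c • (1 : Matrix (Fin D) (Fin D) ℂ) := by
        have hfun : (RCLike.ofReal ∘ hA.eigenvalues : Fin D → ℂ) = fun _ => c := by
          funext k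
          simp only [Function.comp_apply, hc]
          exact congrArg _ (hconst k i0)
        have hW1 : (hA.eigenvectorUnitary : Matrix (Fin D) (Fin D) ℂ)
            * star (hA.eigenvectorUnitary : Matrix (Fin D) (Fin D) ℂ) = 1 :=
          Matrix.mem_unitaryGroup_iff.mp hA.eigenvectorUnitary.2
        calc A = (hA.eigenvectorUnitary : Matrix (Fin D) (Fin D) ℂ)
              * Matrix.diagonal (RCLike.ofReal ∘ hA.eigenvalues)
              * star (hA.eigenvectorUnitary : Matrix (Fin D) (Fin D) ℂ) := hA.spectral_theorem
          _ = c • ((hA.eigenvectorUnitary : Matrix (Fin D) (Fin D) ℂ)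
              * star (hA.eigenvectorUnitary : Matrix (Fin D) (Fin D) ℂ)) := by
                rw [hfun, hdiag_const]
                simp [Matrix.mul_smul, Matrix.smul_mul]
          _ = c • 1 := by rw [hW1]
      have hAB : c * B.trace = (r : ℂ) := by
        rw [hAc] at H1
        rw [← H1, Matrix.smul_mul, one_mul, Matrix.trace_smul, smul_eq_mul]
      have hc0 : c ≠ 0 := fun h => hrC (by rw [← hAB, h, zero_mul])
      have ha0 : hA.eigenvalues i0 ≠ 0 := fun h => hc0 (by rw [hc, h]; simp)
      refine ⟨hA.eigenvalues i0, ha0, Or.inl ⟨hAc, ?_⟩⟩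
      have hBt : B.trace = (r : ℂ) / c := by
        field_simp [hc0] at hAB ⊢
        linear_combination hAB
      rw [hBt, hc]
      push_cast
      ring
    · -- A is not scalar: B must be scalar
      push_neg at hconst
      obtain ⟨i, j, hd⟩ := hconst
      have hij : i ≠ j := fun h => hd (by rw [h])
      have hdC : ((hA.eigenvalues i : ℝ) : ℂ) ≠ ((hA.eigenvalues j : ℝ) : ℂ) := by
        exact_mod_cast hd
      have H2 : ∀ b : OrthonormalBasis (Fin D) ℂ (EuclideanSpace ℂ (Fin D)),
          ∑ k, ((hA.eigenvalues k : ℝ) : ℂ) * qf B (b k) = (r : ℂ) :=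
        fun b => step2 hA H b
      have H4 : ∀ b : OrthonormalBasis (Fin D) ℂ (EuclideanSpace ℂ (Fin D)),
          ∀ k l, qf B (b k) = qf B (b l) :=
        fun b k l => step4 H2 hij hdC b k l
      have hBc : B = (B.trace / D) • (1 : Matrix (Fin D) (Fin D) ℂ) :=
        scalar_of_qf_const hD0 H4
      set c : ℂ := B.trace / D with hc
      have hAB : c * A.trace = (r : ℂ) := by
        rw [hBc] at H1
        rw [← H1, Matrix.mul_smul, Matrix.trace_smul, smul_eq_mul, mul_one]
      have hc0 : c ≠ 0 := fun h => hrC (by rw [← hAB, h, zero_mul])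
      have hcre : ((c.re : ℝ) : ℂ) = c := by
        have hH : Bᴴ = B := hB
        rw [hBc] at hH
        have := congrFun (congrFun hH i0) i0
        simp only [Matrix.conjTranspose_apply, Matrix.smul_apply, Matrix.one_apply_eq,
          smul_eq_mul, mul_one, star_mul', star_one] at this
        have hcc : (starRingEnd ℂ) c = c := by simpa using this
        exact Complex.conj_eq_iff_re.mp hcc
      have hare : (c.re : ℝ) ≠ 0 := fun h => hc0 (by rw [← hcre, h]; simp)
      refine ⟨c.re, hare, Or.inr ⟨by rw [hcre]; exact hBc, ?_⟩⟩
      have : A.trace = (r : ℂ) / c := by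
        field_simp [hc0] at hAB ⊢
        linear_combination hAB
      rw [this, Complex.ofReal_div, hcre]
  · rintro ⟨a, ha, hcase⟩ U hU
    have haC : (a : ℂ) ≠ 0 := Complex.ofReal_ne_zero.mpr ha
    have hU' : U * Uᴴ = 1 := mul_eq_one_comm.mp hU
    rcases hcase with ⟨hAa, hBt⟩ | ⟨hBa, hAt⟩
    · rw [hAa]
      have : Uᴴ * ((a : ℂ) • (1 : Matrix (Fin D) (Fin D) ℂ)) * U * B
          = (a : ℂ) • B := by
        rw [Matrix.mul_smul, mul_one, Matrix.smul_mul, Matrix.smul_mul, hU, one_mul]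
      rw [this, Matrix.trace_smul, smul_eq_mul, hBt]
      push_cast
      field_simp
    · rw [hBa]
      have h1 : Uᴴ * A * U * ((a : ℂ) • (1 : Matrix (Fin D) (Fin D) ℂ))
          = (a : ℂ) • (Uᴴ * A * U) := by
        rw [Matrix.mul_smul, mul_one]
      rw [h1, Matrix.trace_smul, smul_eq_mul]
      have h2 : (Uᴴ * A * U).trace = A.trace := by
        rw [Matrix.trace_mul_cycle, hU', one_mul]
      rw [h2, hAt]
      push_cast
      field_simp
end

section
/- Let D ≥ 2 and let A and B be Hermitian D×D complex matrices. Then Tr(U* A U B) = 0 holds for every unitary D×D matrix U if and only if A = 0, or B = 0, or there exists a nonzero real number a such that either A = a·1 and Tr(B) = 0, or B = a·1 and Tr(A) = 0. -/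
open Matrix

private lemma permCT {D : ℕ} (σ : Equiv.Perm (Fin D)) :
    (σ.toPEquiv.toMatrix : Matrix (Fin D) (Fin D) ℂ)ᴴ = (σ⁻¹).toPEquiv.toMatrix := by
  ext i j
  simp only [PEquiv.toMatrix, conjTranspose_apply, Equiv.toPEquiv_apply, Option.mem_def,
    Option.some.injEq, of_apply, apply_ite (star : ℂ → ℂ), star_one, star_zero]
  have h : (σ⁻¹ i = j) ↔ (σ j = i) := by constructor <;> intro h <;> simp [← h]
  rw [if_congr h rfl rfl]

private lemma permUnit {D : ℕ} (σ : Equiv.Perm (Fin D)) :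
    ((σ⁻¹).toPEquiv.toMatrix : Matrix (Fin D) (Fin D) ℂ) * σ.toPEquiv.toMatrix = 1 := by
  rw [← PEquiv.toMatrix_trans, ← Equiv.toPEquiv_trans]
  rw [show (σ⁻¹ : Equiv.Perm (Fin D)).trans σ = Equiv.refl (Fin D) by ext x; simp]
  simp

private lemma permConjDiag {D : ℕ} (σ : Equiv.Perm (Fin D)) (d : Fin D → ℂ) :
    ((σ⁻¹).toPEquiv.toMatrix : Matrix (Fin D) (Fin D) ℂ) * diagonal d * σ.toPEquiv.toMatrix
      = diagonal (d ∘ ⇑σ⁻¹) := by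
  rw [PEquiv.toMatrix_toPEquiv_mul, PEquiv.mul_toMatrix_toPEquiv]
  rw [← submatrix_diagonal_equiv d (σ⁻¹ : Equiv.Perm (Fin D))]
  rfl

private lemma perm_sum_cases {D : ℕ} (α β : Fin D → ℝ)
    (h : ∀ σ : Equiv.Perm (Fin D), ∑ i, α (σ i) * β i = 0) :
    (∀ i j, α i = α j) ∨ (∀ i j, β i = β j) := by
  by_contra hc
  push_neg at hc
  obtain ⟨⟨p, q, hpq⟩, ⟨i, j, hij⟩⟩ := hc
  have hij' : i ≠ j := fun h => hij (h ▸ rfl)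
  have hpq' : p ≠ q := fun h => hpq (h ▸ rfl)
  set τ := Equiv.swap i p with hτ
  set σ : Equiv.Perm (Fin D) := (Equiv.swap (τ j) q) * τ with hσ
  have hτj : τ j ≠ p := by
    intro hh
    exact hij' (τ.injective (by rw [hh]; simp [hτ]))
  have hσi : σ i = p := by
    simp only [hσ, Equiv.Perm.mul_apply]
    rw [show τ i = p by simp [hτ]]
    exact Equiv.swap_apply_of_ne_of_ne (Ne.symm hτj) hpq'
  have hσj : σ j = q := by
    simp only [hσ, Equiv.Perm.mul_apply]
    exact Equiv.swap_apply_left _ _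
  have h1 := h σ
  have h2 := h (σ * Equiv.swap i j)
  have key : ∑ k, (α (σ k) - α (σ (Equiv.swap i j k))) * β k = 0 := by
    simp only [sub_mul]
    rw [Finset.sum_sub_distrib, h1]
    simpa using h2
  have key2 : ∑ k ∈ ({i, j} : Finset (Fin D)), (α (σ k) - α (σ (Equiv.swap i j k))) * β k = 0 := by
    rw [Finset.sum_subset (Finset.subset_univ _)]
    · exact key
    · intro x _ hx
      simp only [Finset.mem_insert, Finset.mem_singleton, not_or] at hx
      rw [Equiv.swap_apply_of_ne_of_ne hx.1 hx.2]
      ring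
  rw [Finset.sum_pair hij'] at key2
  rw [Equiv.swap_apply_left, Equiv.swap_apply_right, hσi, hσj] at key2
  have : (α p - α q) * (β i - β j) = 0 := by linarith [key2]
  rcases mul_eq_zero.mp this with h' | h'
  · exact hpq (by linarith)
  · exact hij (by linarith)

/-- Lemma 3 of the paper, the `r = 0` case: for Hermitian matrices `A`, `B`, one has
`Tr(U* A U B) = 0` for every unitary `U` iff `A = 0`, or `B = 0`, or one of them is a
nonzero real scalar multiple of the identity and the other is traceless. -/
theorem stmt_5 (D : ℕ) (hD : 2 ≤ D)
    (A B : Matrix (Fin D) (Fin D) ℂ)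
    (hA : A.IsHermitian) (hB : B.IsHermitian) :
    (∀ U : Matrix (Fin D) (Fin D) ℂ, Uᴴ * U = 1 → (Uᴴ * A * U * B).trace = 0) ↔
      (A = 0 ∨ B = 0 ∨
        ∃ a : ℝ, a ≠ 0 ∧
          ((A = (a : ℂ) • (1 : Matrix (Fin D) (Fin D) ℂ) ∧ B.trace = 0) ∨
           (B = (a : ℂ) • (1 : Matrix (Fin D) (Fin D) ℂ) ∧ A.trace = 0))) := by
  constructor
  · intro h
    -- spectral data
    set V : Matrix (Fin D) (Fin D) ℂ := (hA.eigenvectorUnitary : Matrix (Fin D) (Fin D) ℂ) with hVdef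
    set W : Matrix (Fin D) (Fin D) ℂ := (hB.eigenvectorUnitary : Matrix (Fin D) (Fin D) ℂ) with hWdef
    set α : Fin D → ℝ := hA.eigenvalues with hαdef
    set β : Fin D → ℝ := hB.eigenvalues with hβdef
    have hAspec : A = V * diagonal (RCLike.ofReal ∘ α) * star V := hA.spectral_theorem
    have hBspec : B = W * diagonal (RCLike.ofReal ∘ β) * star W := hB.spectral_theorem
    have hV1 : star V * V = 1 := Matrix.mem_unitaryGroup_iff'.mp hA.eigenvectorUnitary.2
    have hV2 : V * star V = 1 := Matrix.mem_unitaryGroup_iff.mp hA.eigenvectorUnitary.2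
    have hW1 : star W * W = 1 := Matrix.mem_unitaryGroup_iff'.mp hB.eigenvectorUnitary.2
    have hW2 : W * star W = 1 := Matrix.mem_unitaryGroup_iff.mp hB.eigenvectorUnitary.2
    have hcolV : ∀ X : Matrix (Fin D) (Fin D) ℂ, star V * (V * X) = X := fun X => by
      rw [← mul_assoc, hV1, one_mul]
    have hcolW : ∀ X : Matrix (Fin D) (Fin D) ℂ, star W * (W * X) = X := fun X => by
      rw [← mul_assoc, hW1, one_mul]
    -- the key sum identity
    have key : ∀ σ : Equiv.Perm (Fin D), ∑ i, (α (σ⁻¹ i) : ℂ) * (β i : ℂ) = 0 := by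
      intro σ
      set P : Matrix (Fin D) (Fin D) ℂ := (σ⁻¹).toPEquiv.toMatrix with hPdef
      set P' : Matrix (Fin D) (Fin D) ℂ := σ.toPEquiv.toMatrix with hP'def
      -- P'ᴴ = P, and P * P' = 1 with σ⁻¹⁻¹ = σ
      have hPct : P'ᴴ = P := permCT σ
      have hPP' : P * P' = 1 := permUnit σ
      set U : Matrix (Fin D) (Fin D) ℂ := V * P' * star W with hUdef
      have hUH : Uᴴ = W * (P * star V) := by
        calc Uᴴ = (star W)ᴴ * (P'ᴴ * Vᴴ) := by
              rw [hUdef, conjTranspose_mul, conjTranspose_mul]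
          _ = W * (P * star V) := by
              rw [star_eq_conjTranspose W, conjTranspose_conjTranspose, hPct,
                ← star_eq_conjTranspose V]
      have hU : Uᴴ * U = 1 := by
        rw [hUH, hUdef]
        simp only [mul_assoc]
        rw [hcolV, ← mul_assoc P P', hPP', one_mul, hW2]
      have htr := h U hU
      rw [hUH, hUdef, hAspec, hBspec] at htr
      -- collapse
      simp only [mul_assoc] at htr
      rw [hcolV, hcolV, hcolW] at htr
      -- now trace (W * (P * (Dα * (P' * (Dβ * star W)))))
      rw [trace_mul_comm] at htr
      simp only [mul_assoc] at htr
      rw [hW1, mul_one] at htr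
      -- trace (P * (Dα * (P' * Dβ)))
      rw [show (P * (diagonal (RCLike.ofReal ∘ α) * (P' * diagonal (RCLike.ofReal ∘ β))))
            = (P * diagonal (RCLike.ofReal ∘ α) * P') * diagonal (RCLike.ofReal ∘ β) by
          simp only [mul_assoc]] at htr
      rw [permConjDiag σ] at htr
      rw [diagonal_mul_diagonal, trace_diagonal] at htr
      rw [← htr]
      apply Finset.sum_congr rfl
      intro i _
      simp
    have keyℝ : ∀ σ : Equiv.Perm (Fin D), ∑ i, α (σ i) * β i = 0 := by
      intro σ
      have := key σ⁻¹
      simp only [inv_inv] at this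
      have h2 : ((∑ i, α (σ i) * β i : ℝ) : ℂ) = 0 := by push_cast; exact this
      exact_mod_cast h2
    have hTrA : A.trace = ((∑ i, α i : ℝ) : ℂ) := by
      rw [hAspec, trace_mul_cycle, hV1, one_mul, trace_diagonal]
      push_cast
      rfl
    have hTrB : B.trace = ((∑ i, β i : ℝ) : ℂ) := by
      rw [hBspec, trace_mul_cycle, hW1, one_mul, trace_diagonal]
      push_cast
      rfl
    have i0 : Fin D := ⟨0, by omega⟩
    rcases perm_sum_cases α β keyℝ with hconst | hconst
    · -- α constant, value a
      set a : ℝ := α i0 with hadef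
      have hDα : diagonal (RCLike.ofReal ∘ α) = (a : ℂ) • (1 : Matrix (Fin D) (Fin D) ℂ) := by
        ext i j
        by_cases hij : i = j
        · subst hij
          simp [diagonal_apply_eq, hconst i i0, hadef]
        · simp [diagonal_apply_ne _ hij, Matrix.one_apply_ne hij, hij]
      have hAval : A = (a : ℂ) • (1 : Matrix (Fin D) (Fin D) ℂ) := by
        rw [hAspec, hDα, Matrix.mul_smul, Matrix.mul_one, Matrix.smul_mul, hV2]
      have hsum0 : a * (∑ i, β i) = 0 := by
        rw [Finset.mul_sum]
        have := keyℝ 1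
        simpa [hconst _ i0] using this
      by_cases ha : a = 0
      · left
        rw [hAval, ha]
        simp
      · right; right
        refine ⟨a, ha, Or.inl ⟨hAval, ?_⟩⟩
        rw [hTrB]
        have : (∑ i, β i) = 0 := by
          rcases mul_eq_zero.mp hsum0 with h' | h'
          · exact absurd h' ha
          · exact h'
        rw [this]; simp
    · -- β constant, value b
      set b : ℝ := β i0 with hbdef
      have hDβ : diagonal (RCLike.ofReal ∘ β) = (b : ℂ) • (1 : Matrix (Fin D) (Fin D) ℂ) := by
        ext i j
        by_cases hij : i = j
        · subst hij
          simp [diagonal_apply_eq, hconst i i0, hbdef]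
        · simp [diagonal_apply_ne _ hij, Matrix.one_apply_ne hij, hij]
      have hBval : B = (b : ℂ) • (1 : Matrix (Fin D) (Fin D) ℂ) := by
        rw [hBspec, hDβ, Matrix.mul_smul, Matrix.mul_one, Matrix.smul_mul, hW2]
      have hsum0 : (∑ i, α i) * b = 0 := by
        rw [Finset.sum_mul]
        have := keyℝ 1
        simpa [hconst _ i0] using this
      by_cases hb : b = 0
      · right; left
        rw [hBval, hb]
        simp
      · right; right
        refine ⟨b, hb, Or.inr ⟨hBval, ?_⟩⟩
        rw [hTrA]
        have : (∑ i, α i) = 0 := by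
          rcases mul_eq_zero.mp hsum0 with h' | h'
          · exact h'
          · exact absurd h' hb
        rw [this]; simp
  · rintro (rfl | rfl | ⟨a, ha, ⟨hA', htr⟩ | ⟨hB', htr⟩⟩) <;> intro U hU
    · simp
    · simp
    · rw [hA', Matrix.mul_smul, Matrix.mul_one, Matrix.smul_mul, Matrix.smul_mul, hU, one_mul,
        trace_smul, htr, smul_zero]
    · rw [hB', Matrix.mul_smul, Matrix.mul_one, trace_smul, trace_mul_cycle,
        mul_eq_one_comm.mp hU, one_mul, htr, smul_zero]
end

section
/- Let D ≥ 2, let ρ and σ be D×D density matrices, and let a, b ∈ ℂ^D be unit vectors. Then ⟨a, U* ρ U a⟩ = ⟨b, U σ U* b⟩ holds for every unitary D×D matrix U if and only if there exists a real number α with −1/(D−1) ≤ α ≤ 1 such that ρ = (1−α)/D · 1 + α · |b⟩⟨b| and σ = (1−α)/D · 1 + α · |a⟩⟨a|. -/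
open Matrix
open scoped ComplexOrder
namespace S6
variable {D : ℕ}

/-- cast a plain vector into EuclideanSpace -/
noncomputable def toE (v : Fin D → ℂ) : EuclideanSpace ℂ (Fin D) := (WithLp.equiv 2 (Fin D → ℂ)).symm v

lemma inner_eq_dot (x y : Fin D → ℂ) :
    inner (𝕜 := ℂ) (toE x) (toE y) = star x ⬝ᵥ y := by
  simp [PiLp.inner_apply, dotProduct, RCLike.inner_apply, mul_comm, toE]

lemma dot_expand (M : Matrix (Fin D) (Fin D) ℂ) (x y : Fin D → ℂ) (c d : ℂ) :
    star (c • x + d • y) ⬝ᵥ M *ᵥ (c • x + d • y) =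
      star c * c * (star x ⬝ᵥ M *ᵥ x) + star c * d * (star x ⬝ᵥ M *ᵥ y)
      + star d * c * (star y ⬝ᵥ M *ᵥ x) + star d * d * (star y ⬝ᵥ M *ᵥ y) := by
  simp only [star_add, star_smul, Matrix.mulVec_add, Matrix.mulVec_smul,
    add_dotProduct, dotProduct_add, smul_dotProduct, dotProduct_smul, smul_eq_mul]
  ring

lemma eq_zero_of_forall_dot (M : Matrix (Fin D) (Fin D) ℂ)
    (h : ∀ u : Fin D → ℂ, star u ⬝ᵥ M *ᵥ u = 0) : M = 0 := by
  classical
  set e : Fin D → (Fin D → ℂ) := fun k => Pi.single k 1 with he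
  have hd : ∀ i j : Fin D, star (e i) ⬝ᵥ M *ᵥ (e j) = M i j := by
    intro i j
    rw [he]
    simp only [Matrix.mulVec_single]
    simp [dotProduct, Pi.single_apply, apply_ite]
  ext i j
  by_cases hij : i = j
  · subst hij
    have := h (e i); rwa [hd] at this
  · have h1 := h ((1:ℂ) • e i + (1:ℂ) • e j)
    have h2 := h ((1:ℂ) • e i + Complex.I • e j)
    rw [dot_expand] at h1 h2
    simp only [hd] at h1 h2
    have hii : M i i = 0 := by have := h (e i); rwa [hd] at this
    have hjj : M j j = 0 := by have := h (e j); rwa [hd] at this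
    rw [hii, hjj] at h1 h2
    simp only [Complex.star_def, Complex.conj_I, _root_.map_one, one_mul, mul_one, mul_zero,
      add_zero, zero_add] at h1 h2
    have hji : M j i = - M i j := by linear_combination h1
    rw [hji] at h2
    have h3 : (2 * Complex.I) * M i j = 0 := by linear_combination h2
    have h2I : (2 * Complex.I) ≠ 0 := by simp [Complex.I_ne_zero]
    simpa [Matrix.zero_apply] using (mul_eq_zero.mp h3).resolve_left h2I

lemma norm_eq_one (v : Fin D → ℂ) (hv : star v ⬝ᵥ v = 1) : ‖toE v‖ = 1 := by
  have h : (inner (𝕜 := ℂ) (toE v) (toE v)) = 1 := by rw [inner_eq_dot]; exact hv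
  have h2 := inner_self_eq_norm_sq_to_K (𝕜 := ℂ) (toE v)
  rw [h] at h2
  have h3 : (‖toE v‖ : ℝ)^2 = 1 := by
    have := congrArg Complex.re h2.symm
    simpa [← Complex.ofReal_pow] using this
  nlinarith [norm_nonneg (toE v)]

lemma normSq_dot_le_one (v w : Fin D → ℂ) (hv : star v ⬝ᵥ v = 1) (hw : star w ⬝ᵥ w = 1) :
    Complex.normSq (star v ⬝ᵥ w) ≤ 1 := by
  have h := norm_inner_le_norm (𝕜 := ℂ) (toE v) (toE w)
  rw [inner_eq_dot, norm_eq_one v hv, norm_eq_one w hw] at h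
  have h' : ‖star v ⬝ᵥ w‖ ≤ 1 := by simpa using h
  have := Complex.sq_norm (star v ⬝ᵥ w)
  nlinarith [norm_nonneg (star v ⬝ᵥ w)]

lemma dot_conj (v w : Fin D → ℂ) : star w ⬝ᵥ v = star (star v ⬝ᵥ w) := star_dotProduct w v

lemma dot_self_eq_zero {v : Fin D → ℂ} (h : star v ⬝ᵥ v = 0) : v = 0 := by
  have h1 : inner (𝕜 := ℂ) (toE v) (toE v) = 0 := by rw [inner_eq_dot]; exact h
  have h2 := inner_self_eq_zero.mp h1
  simpa [toE] using congrArg (WithLp.equiv 2 (Fin D → ℂ)) h2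

lemma dot_residual (x y : Fin D → ℂ) (hx : star x ⬝ᵥ x = 1) :
    star (y - (star x ⬝ᵥ y) • x) ⬝ᵥ (y - (star x ⬝ᵥ y) • x) =
      star y ⬝ᵥ y - ((Complex.normSq (star x ⬝ᵥ y) : ℝ) : ℂ) := by
  have hyx : star y ⬝ᵥ x = star (star x ⬝ᵥ y) := dot_conj x y
  simp only [star_sub, star_smul, sub_dotProduct, dotProduct_sub, smul_dotProduct,
    dotProduct_smul, smul_eq_mul, hx, hyx, Complex.normSq_eq_conj_mul_self,
    Complex.star_def]
  ring

lemma dot_orth_residual (x y : Fin D → ℂ) (hx : star x ⬝ᵥ x = 1) :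
    star x ⬝ᵥ (y - (star x ⬝ᵥ y) • x) = 0 := by
  simp [dotProduct_sub, dotProduct_smul, hx, smul_eq_mul]

lemma inner_eq_dot2 (x y : EuclideanSpace ℂ (Fin D)) :
    inner ℂ x y = star (x : Fin D → ℂ) ⬝ᵥ (y : Fin D → ℂ) := by
  simp [PiLp.inner_apply, dotProduct, RCLike.inner_apply, mul_comm]
lemma exists_onb_pair (hD : 2 ≤ D) (v w : Fin D → ℂ)
    (hv : star v ⬝ᵥ v = 1) (hw : star w ⬝ᵥ w = 1) (hvw : star v ⬝ᵥ w = 0) :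
    ∃ f : Fin D → (Fin D → ℂ),
      (∀ i j, star (f i) ⬝ᵥ f j = if i = j then 1 else 0) ∧
      f ⟨0, by omega⟩ = v ∧ f ⟨1, by omega⟩ = w := by
  set i0 : Fin D := ⟨0, by omega⟩ with hi0
  set i1 : Fin D := ⟨1, by omega⟩ with hi1
  have hne : i0 ≠ i1 := by simp [hi0, hi1, Fin.ext_iff]
  have hwv : star w ⬝ᵥ v = 0 := by rw [dot_conj, hvw, star_zero]
  classical
  set vf : Fin D → EuclideanSpace ℂ (Fin D) :=
    fun i => if i = i0 then WithLp.toLp 2 v else if i = i1 then WithLp.toLp 2 w else 0 with hvf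
  have hvf0 : vf i0 = v := by simp [hvf]
  have hvf1 : vf i1 = w := by simp [hvf, hne.symm]
  have hcard : Module.finrank ℂ (EuclideanSpace ℂ (Fin D)) = Fintype.card (Fin D) := by simp
  have horth : Orthonormal ℂ (({i0, i1} : Set (Fin D)).restrict vf) := by
    rw [orthonormal_iff_ite]
    rintro ⟨i, hi⟩ ⟨j, hj⟩
    simp only [Set.restrict, Set.domRestrict_apply]
    have key : ∀ i' j' : Fin D, i' ∈ ({i0, i1} : Set (Fin D)) → j' ∈ ({i0, i1} : Set (Fin D)) →
        inner ℂ (vf i') (vf j') = if i' = j' then (1:ℂ) else 0 := by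
      rintro i' j' (rfl|rfl) (rfl|rfl) <;>
        rw [inner_eq_dot2] <;>
        simp only [hvf0, hvf1] <;>
        simp [hv, hw, hvw, hwv, hne, hne.symm]
    rw [key i j hi hj]
    simp [Subtype.ext_iff]
  obtain ⟨bOn, hbOn⟩ := horth.exists_orthonormalBasis_extension_of_card_eq hcard
  refine ⟨fun i => (bOn i : Fin D → ℂ), ?_, ?_, ?_⟩
  · intro i j
    have := (orthonormal_iff_ite (𝕜 := ℂ)).mp bOn.orthonormal i j
    rw [inner_eq_dot2] at this
    simpa using this
  · simpa [hvf0] using congrArg (fun x : EuclideanSpace ℂ (Fin D) => (x : Fin D → ℂ))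
      (hbOn i0 (by simp))
  · simpa [hvf1] using congrArg (fun x : EuclideanSpace ℂ (Fin D) => (x : Fin D → ℂ))
      (hbOn i1 (by simp))
lemma exists_onb_one (hD : 2 ≤ D) (v : Fin D → ℂ) (hv : star v ⬝ᵥ v = 1) :
    ∃ f : Fin D → (Fin D → ℂ),
      (∀ i j, star (f i) ⬝ᵥ f j = if i = j then 1 else 0) ∧
      f ⟨0, by omega⟩ = v := by
  set i0 : Fin D := ⟨0, by omega⟩ with hi0
  classical
  set vf : Fin D → EuclideanSpace ℂ (Fin D) := fun i => if i = i0 then WithLp.toLp 2 v else 0 with hvf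
  have hvf0 : vf i0 = v := by simp [hvf]
  have hcard : Module.finrank ℂ (EuclideanSpace ℂ (Fin D)) = Fintype.card (Fin D) := by simp
  have horth : Orthonormal ℂ (({i0} : Set (Fin D)).restrict vf) := by
    rw [orthonormal_iff_ite]
    rintro ⟨i, hi⟩ ⟨j, hj⟩
    simp only [Set.mem_singleton_iff] at hi hj
    subst hi; subst hj
    simp only [Set.restrict, Set.domRestrict_apply]
    rw [inner_eq_dot2]
    simp only [hvf0]
    simp [hv]
  obtain ⟨bOn, hbOn⟩ := horth.exists_orthonormalBasis_extension_of_card_eq hcard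
  refine ⟨fun i => (bOn i : Fin D → ℂ), ?_, ?_⟩
  · intro i j
    have := (orthonormal_iff_ite (𝕜 := ℂ)).mp bOn.orthonormal i j
    rw [inner_eq_dot2] at this
    simpa using this
  · simpa [hvf0] using congrArg (fun x : EuclideanSpace ℂ (Fin D) => (x : Fin D → ℂ))
      (hbOn i0 (by simp))
lemma exists_unitary_of_onb (f g : Fin D → (Fin D → ℂ))
    (hf : ∀ i j, star (f i) ⬝ᵥ f j = if i = j then 1 else 0)
    (hg : ∀ i j, star (g i) ⬝ᵥ g j = if i = j then 1 else 0) :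
    ∃ U : Matrix (Fin D) (Fin D) ℂ, Uᴴ * U = 1 ∧ ∀ i, U *ᵥ f i = g i := by
  classical
  set F : Matrix (Fin D) (Fin D) ℂ := (Matrix.of f).map star with hF
  set G : Matrix (Fin D) (Fin D) ℂ := (Matrix.of g)ᵀ with hG
  have hGunit : Gᴴ * G = 1 := by
    ext i j
    simp only [Matrix.mul_apply, Matrix.conjTranspose_apply, hG, Matrix.transpose_apply,
      Matrix.of_apply, Matrix.one_apply]
    simpa [dotProduct] using hg i j
  have hFunit : F * Fᴴ = 1 := by
    ext i j
    simp only [Matrix.mul_apply, Matrix.conjTranspose_apply, hF, Matrix.map_apply,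
      Matrix.of_apply, Matrix.one_apply, star_star]
    simpa [dotProduct, Pi.star_apply] using hf i j
  have hFunit' : Fᴴ * F = 1 := mul_eq_one_comm.mp hFunit
  refine ⟨G * F, ?_, ?_⟩
  · rw [Matrix.conjTranspose_mul, Matrix.mul_assoc, ← Matrix.mul_assoc Gᴴ, hGunit,
      Matrix.one_mul, hFunit']
  · intro i
    rw [← Matrix.mulVec_mulVec]
    have h1 : F *ᵥ f i = fun j => if j = i then 1 else 0 := by
      funext j
      simpa [Matrix.mulVec, hF, dotProduct, Pi.star_apply] using hf j i
    rw [h1]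
    funext l
    simp [Matrix.mulVec, hG, dotProduct]

lemma dot_combo (x y : Fin D → ℂ) (c d c' d' : ℂ) :
    star (c • x + d • y) ⬝ᵥ (c' • x + d' • y) =
      star c * c' * (star x ⬝ᵥ x) + star c * d' * (star x ⬝ᵥ y)
      + star d * c' * (star y ⬝ᵥ x) + star d * d' * (star y ⬝ᵥ y) := by
  simp only [star_add, star_smul, add_dotProduct, dotProduct_add, smul_dotProduct,
    dotProduct_smul, smul_eq_mul]
  ring

lemma dot_combo_single (x y v : Fin D → ℂ) (c d : ℂ) :
    star (c • x + d • y) ⬝ᵥ v = star c * (star x ⬝ᵥ v) + star d * (star y ⬝ᵥ v) := by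
  simp only [star_add, star_smul, add_dotProduct, smul_dotProduct, smul_eq_mul]

lemma dot_vecMulVec (x y v w : Fin D → ℂ) :
    star x ⬝ᵥ (vecMulVec v w) *ᵥ y = (star x ⬝ᵥ v) * (w ⬝ᵥ y) := by
  have h : (vecMulVec v w) *ᵥ y = (w ⬝ᵥ y) • v := by
    funext i
    simp only [Matrix.mulVec, dotProduct, vecMulVec_apply, Pi.smul_apply, smul_eq_mul,
      Finset.sum_mul]
    exact Finset.sum_congr rfl fun j _ => by ring
  rw [h, dotProduct_smul, smul_eq_mul, mul_comm]

lemma structure_lemma (ρ : Matrix (Fin D) (Fin D) ℂ)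
    (b f1 : Fin D → ℂ) (hb : star b ⬝ᵥ b = 1) (hf1 : star f1 ⬝ᵥ f1 = 1)
    (hbf1 : star f1 ⬝ᵥ b = 0)
    (hK : ∀ u u' : Fin D → ℂ, star u ⬝ᵥ u = 1 → star u' ⬝ᵥ u' = 1 →
        star u ⬝ᵥ b = star u' ⬝ᵥ b →
        star u ⬝ᵥ ρ *ᵥ u = star u' ⬝ᵥ ρ *ᵥ u') :
    ρ = (star f1 ⬝ᵥ ρ *ᵥ f1) • (1 : Matrix (Fin D) (Fin D) ℂ)
        + ((star b ⬝ᵥ ρ *ᵥ b) - (star f1 ⬝ᵥ ρ *ᵥ f1)) • vecMulVec b (star b) := by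
  have hbf1' : star b ⬝ᵥ f1 = 0 := by rw [dot_conj f1 b, hbf1, star_zero]
  set β : ℂ := star b ⬝ᵥ ρ *ᵥ b with hβ
  set c : ℂ := star f1 ⬝ᵥ ρ *ᵥ f1 with hc
  set t : ℂ := star b ⬝ᵥ ρ *ᵥ f1 with ht
  set t' : ℂ := star f1 ⬝ᵥ ρ *ᵥ b with ht'
  -- step 1 : cross terms vanish
  set rc : ℂ := (((Real.sqrt 2)⁻¹ : ℝ) : ℂ) with hrcdef
  have hrc : rc * rc = 1/2 := by
    rw [hrcdef, ← Complex.ofReal_mul]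
    norm_cast
    rw [← Real.sqrt_mul_self (by norm_num : (0:ℝ) ≤ 2)]
    field_simp
    norm_num
  have hrcstar : star rc = rc := by
    rw [hrcdef]; simp [Complex.star_def]
  set vε : ℂ → (Fin D → ℂ) := fun ε => rc • b + (rc * ε) • f1 with hvε
  have hunitε : ∀ ε : ℂ, star ε * ε = 1 → star (vε ε) ⬝ᵥ (vε ε) = 1 := by
    intro ε hε
    rw [hvε]
    simp only []
    rw [dot_combo, hb, hf1, hbf1, hbf1']
    rw [star_mul', hrcstar]
    linear_combination (1 + star ε * ε) * hrc + (1/2) * hε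
  have hdotbε : ∀ ε : ℂ, star (vε ε) ⬝ᵥ b = rc := by
    intro ε
    rw [hvε]
    simp only []
    rw [dot_combo_single, hb, hbf1, star_mul', hrcstar]
    ring
  have pexp : ∀ ε : ℂ, star (vε ε) ⬝ᵥ ρ *ᵥ (vε ε)
      = (1/2) * (β + ε * t + star ε * t' + (star ε * ε) * c) := by
    intro ε
    rw [hvε]
    simp only []
    rw [dot_expand, hrcstar, star_mul', hrcstar, ← hβ, ← hc, ← ht, ← ht']
    linear_combination (β + ε * t + star ε * t' + star ε * ε * c) * hrc
  have hsq1 : star (1:ℂ) * 1 = 1 := by simp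
  have hsqm1 : star (-1:ℂ) * (-1) = 1 := by simp
  have hsqI : star (Complex.I) * Complex.I = 1 := by
    simp [Complex.star_def, Complex.conj_I, Complex.I_mul_I]
  have hsqmI : star (-Complex.I) * (-Complex.I) = 1 := by
    simp [Complex.star_def, Complex.conj_I, Complex.I_mul_I]
  have h1 := hK (vε 1) (vε (-1)) (hunitε 1 hsq1) (hunitε (-1) hsqm1)
      ((hdotbε 1).trans (hdotbε (-1)).symm)
  have h2 := hK (vε Complex.I) (vε (-Complex.I)) (hunitε _ hsqI) (hunitε _ hsqmI)
      ((hdotbε _).trans (hdotbε _).symm)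
  rw [pexp, pexp] at h1 h2
  simp only [star_one, one_mul, mul_one, star_neg, Complex.star_def, Complex.conj_I,
    neg_neg, neg_mul, mul_neg] at h1 h2
  have ht1 : t + t' = 0 := by linear_combination h1
  have ht2 : t - t' = 0 := by linear_combination (-Complex.I) * h2 + (t - t') * Complex.I_sq
  have htz : t = 0 := by linear_combination (ht1 + ht2) / 2
  have htz' : t' = 0 := by linear_combination (ht1 - ht2) / 2
  -- step 2 : value on unit vectors
  have hunit_val : ∀ u : Fin D → ℂ, star u ⬝ᵥ u = 1 →
      star u ⬝ᵥ ρ *ᵥ u = c * (star u ⬝ᵥ u) + (β - c) * ((star u ⬝ᵥ b) * (star b ⬝ᵥ u)) := by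
    intro u hu
    set z : ℂ := star u ⬝ᵥ b with hz
    have hbu : star b ⬝ᵥ u = star z := dot_conj u b
    have hnz1 : Complex.normSq z ≤ 1 := normSq_dot_le_one u b hu hb
    set nz : ℝ := Complex.normSq z with hnzdef
    set s : ℝ := Real.sqrt (1 - nz) with hs
    have hs2 : (s:ℝ)^2 = 1 - nz := Real.sq_sqrt (by linarith)
    have hscsq : (s:ℂ) * (s:ℂ) = ((1 - nz : ℝ) : ℂ) := by
      rw [← Complex.ofReal_mul]; norm_cast; rw [← hs2]; ring
    have hsstar : star ((s:ℂ)) = (s:ℂ) := by simp [Complex.star_def]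
    have hzz : star (star z) * star z = ((nz : ℝ) : ℂ) := by
      rw [star_star]
      rw [hnzdef]
      rw [Complex.normSq_eq_conj_mul_self]
      rw [Complex.star_def]; ring
    set uz : Fin D → ℂ := (star z) • b + (s:ℂ) • f1 with huz
    have huz_unit : star uz ⬝ᵥ uz = 1 := by
      rw [huz, dot_combo, hb, hf1, hbf1, hbf1', hzz, hsstar, hscsq]
      push_cast
      ring
    have huz_dotb : star uz ⬝ᵥ b = z := by
      rw [huz, dot_combo_single, hb, hbf1, star_star, hsstar]
      ring
    have hpu := hK u uz hu huz_unit (by rw [huz_dotb])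
    have hpuz : star uz ⬝ᵥ ρ *ᵥ uz = ((nz:ℝ):ℂ) * β + ((1 - nz : ℝ):ℂ) * c := by
      rw [huz, dot_expand, ← hβ, ← hc, ← ht, ← ht', htz, htz', hzz, hsstar, hscsq]
      ring
    rw [hpu, hpuz, hu, hbu]
    have : z * star z = ((nz:ℝ):ℂ) := by
      rw [hnzdef, Complex.normSq_eq_conj_mul_self, Complex.star_def]; ring
    rw [this]
    push_cast
    ring
  -- step 3 : extend to all vectors by scaling
  have hmain : ∀ v : Fin D → ℂ,
      star v ⬝ᵥ ρ *ᵥ v = c * (star v ⬝ᵥ v) + (β - c) * ((star v ⬝ᵥ b) * (star b ⬝ᵥ v)) := by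
    intro v
    by_cases hv0 : v = 0
    · subst hv0; simp
    · have hnv : star v ⬝ᵥ v = ((‖toE v‖^2 : ℝ) : ℂ) := by
        rw [← inner_eq_dot]
        simpa using inner_self_eq_norm_sq_to_K (𝕜 := ℂ) (toE v)
      set n : ℝ := ‖toE v‖ with hn
      have hnne : n ≠ 0 := by
        intro h0
        apply hv0
        apply dot_self_eq_zero
        rw [hnv, h0]; simp
      have hncne : (n:ℂ) ≠ 0 := by simpa using hnne
      set v1 : Fin D → ℂ := ((n:ℂ))⁻¹ • v with hv1def
      have hv1unit : star v1 ⬝ᵥ v1 = 1 := by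
        rw [hv1def]
        simp only [star_smul, smul_dotProduct, dotProduct_smul, smul_eq_mul]
        rw [show star (((n:ℂ))⁻¹) = ((n:ℂ))⁻¹ by simp [Complex.star_def, ← Complex.ofReal_inv]]
        rw [hnv]
        push_cast
        field_simp
      have hvv1 : v = (n:ℂ) • v1 := by
        rw [hv1def, smul_smul, mul_inv_cancel₀ hncne, one_smul]
      rw [hvv1]
      simp only [star_smul, smul_dotProduct, dotProduct_smul, Matrix.mulVec_smul, smul_eq_mul]
      rw [hunit_val v1 hv1unit, hv1unit]
      ring
  have hzero : ρ - (c • (1 : Matrix (Fin D) (Fin D) ℂ) + (β - c) • vecMulVec b (star b)) = 0 := by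
    apply eq_zero_of_forall_dot
    intro v
    rw [Matrix.sub_mulVec, dotProduct_sub, Matrix.add_mulVec, dotProduct_add,
      Matrix.smul_mulVec, dotProduct_smul, Matrix.one_mulVec,
      Matrix.smul_mulVec, dotProduct_smul, dot_vecMulVec, hmain v]
    simp only [smul_eq_mul]
    ring
  have := sub_eq_zero.mp hzero
  rw [this]

lemma exists_unitary_two (hD : 2 ≤ D) (a w u b : Fin D → ℂ)
    (ha : star a ⬝ᵥ a = 1) (hw : star w ⬝ᵥ w = 1) (hu : star u ⬝ᵥ u = 1) (hb : star b ⬝ᵥ b = 1)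
    (hg : star a ⬝ᵥ w = star u ⬝ᵥ b) :
    ∃ U : Matrix (Fin D) (Fin D) ℂ, Uᴴ * U = 1 ∧ U *ᵥ a = u ∧ U *ᵥ w = b := by
  set z : ℂ := star a ⬝ᵥ w with hz
  have hub : star u ⬝ᵥ b = z := hg.symm
  set nz : ℝ := Complex.normSq z with hnz
  set w' : Fin D → ℂ := w - z • a with hw'
  set b' : Fin D → ℂ := b - z • u with hb'
  have hw'dot : star w' ⬝ᵥ w' = ((1 - nz : ℝ) : ℂ) := by
    have := dot_residual a w ha
    rw [← hz, ← hw', hw] at this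
    rw [this]; push_cast; ring
  have hb'dot : star b' ⬝ᵥ b' = ((1 - nz : ℝ) : ℂ) := by
    have := dot_residual u b hu
    rw [hub, ← hb', hb] at this
    rw [this]
    have : Complex.normSq z = nz := rfl
    push_cast; ring
  have haw' : star a ⬝ᵥ w' = 0 := by
    have := dot_orth_residual a w ha; rwa [← hz, ← hw'] at this
  have hub' : star u ⬝ᵥ b' = 0 := by
    have := dot_orth_residual u b hu; rwa [hub, ← hb'] at this
  have hnz1 : nz ≤ 1 := normSq_dot_le_one a w ha hw
  have hwz : w = z • a + w' := by rw [hw']; abel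
  have hbz : b = z • u + b' := by rw [hb']; abel
  set i0 : Fin D := ⟨0, by omega⟩ with hi0
  by_cases hcase : (1 - nz : ℝ) = 0
  · -- w' = 0, b' = 0
    have hw'0 : w' = 0 := dot_self_eq_zero (by rw [hw'dot, hcase]; simp)
    have hb'0 : b' = 0 := dot_self_eq_zero (by rw [hb'dot, hcase]; simp)
    obtain ⟨f, hf, hf0⟩ := exists_onb_one hD a ha
    obtain ⟨g, hg', hg0⟩ := exists_onb_one hD u hu
    obtain ⟨U, hU, hUmap⟩ := exists_unitary_of_onb f g hf hg'
    have hUa : U *ᵥ a = u := by rw [← hf0, hUmap, hg0]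
    refine ⟨U, hU, hUa, ?_⟩
    rw [hwz, hw'0, hbz, hb'0, add_zero, add_zero, Matrix.mulVec_smul, hUa]
  · have hpos : 0 < 1 - nz := lt_of_le_of_ne (by linarith) (Ne.symm hcase)
    set s : ℝ := Real.sqrt (1 - nz) with hs
    have hs2 : (s : ℝ)^2 = 1 - nz := Real.sq_sqrt (le_of_lt hpos)
    have hspos : 0 < s := Real.sqrt_pos.mpr hpos
    have hsne : (s : ℂ) ≠ 0 := by
      simp only [ne_eq, Complex.ofReal_eq_zero]; exact ne_of_gt hspos
    set w2 : Fin D → ℂ := ((s:ℂ))⁻¹ • w' with hw2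
    set b2 : Fin D → ℂ := ((s:ℂ))⁻¹ • b' with hb2
    have hscsq : ((s:ℂ))⁻¹ * ((s:ℂ))⁻¹ * ((1 - nz : ℝ) : ℂ) = 1 := by
      have : ((1 - nz : ℝ) : ℂ) = (s:ℂ) * (s:ℂ) := by
        rw [← Complex.ofReal_mul]; norm_cast; rw [← hs2]; ring
      rw [this]
      field_simp
    have hw2dot : star w2 ⬝ᵥ w2 = 1 := by
      rw [hw2]
      simp only [star_smul, smul_dotProduct, dotProduct_smul, smul_eq_mul, hw'dot]
      rw [show star ((s:ℂ))⁻¹ = ((s:ℂ))⁻¹ by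
        simp [Complex.star_def, ← Complex.ofReal_inv]]
      rw [← mul_assoc]; exact hscsq
    have hb2dot : star b2 ⬝ᵥ b2 = 1 := by
      rw [hb2]
      simp only [star_smul, smul_dotProduct, dotProduct_smul, smul_eq_mul, hb'dot]
      rw [show star ((s:ℂ))⁻¹ = ((s:ℂ))⁻¹ by
        simp [Complex.star_def, ← Complex.ofReal_inv]]
      rw [← mul_assoc]; exact hscsq
    have haw2 : star a ⬝ᵥ w2 = 0 := by
      rw [hw2]; simp [dotProduct_smul, haw']
    have hub2 : star u ⬝ᵥ b2 = 0 := by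
      rw [hb2]; simp [dotProduct_smul, hub']
    obtain ⟨f, hf, hf0, hf1⟩ := exists_onb_pair hD a w2 ha hw2dot haw2
    obtain ⟨g, hg', hg0, hg1⟩ := exists_onb_pair hD u b2 hu hb2dot hub2
    obtain ⟨U, hU, hUmap⟩ := exists_unitary_of_onb f g hf hg'
    have hUa : U *ᵥ a = u := by rw [← hf0, hUmap, hg0]
    have hUw2 : U *ᵥ w2 = b2 := by rw [← hf1, hUmap, hg1]
    refine ⟨U, hU, hUa, ?_⟩
    have hsmul : (s:ℂ) • w2 = w' := by
      rw [hw2, smul_smul, mul_inv_cancel₀ hsne, one_smul]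
    have hsmulb : (s:ℂ) • b2 = b' := by
      rw [hb2, smul_smul, mul_inv_cancel₀ hsne, one_smul]
    rw [hwz, ← hsmul, hbz, ← hsmulb, Matrix.mulVec_add, Matrix.mulVec_smul,
      Matrix.mulVec_smul, hUa, hUw2]

lemma conj_dot (M V : Matrix (Fin D) (Fin D) ℂ) (x : Fin D → ℂ) :
    star x ⬝ᵥ (Vᴴ * M * V) *ᵥ x = star (V *ᵥ x) ⬝ᵥ M *ᵥ (V *ᵥ x) := by
  rw [← Matrix.mulVec_mulVec, ← Matrix.mulVec_mulVec,
    dotProduct_mulVec (star x) Vᴴ, ← Matrix.star_mulVec]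

lemma trace_vmv (v w : Fin D → ℂ) : (vecMulVec v w).trace = w ⬝ᵥ v := by
  simp [Matrix.trace, Matrix.diag, vecMulVec_apply, dotProduct, mul_comm]

lemma normSq_cast (z : ℂ) : ((Complex.normSq z : ℝ) : ℂ) = star z * z := by
  rw [Complex.normSq_eq_conj_mul_self, Complex.star_def]

end S6

open S6 in
/-- Lemma 4 of the paper (finite-dimensional case): for density matrices `ρ`, `σ` and unit
vectors `a`, `b` in `ℂ^D`, the relation `⟨a, U* ρ U a⟩ = ⟨b, U σ U* b⟩` holds for every
unitary `U` iff there is `α ∈ [-1/(D-1), 1]` with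
`ρ = (1-α)/D • 1 + α |b⟩⟨b|` and `σ = (1-α)/D • 1 + α |a⟩⟨a|`. -/
theorem stmt_6 (D : ℕ) (hD : 2 ≤ D)
    (ρ σ : Matrix (Fin D) (Fin D) ℂ)
    (hρ : ρ.PosSemidef) (hρtr : ρ.trace = 1)
    (hσ : σ.PosSemidef) (hσtr : σ.trace = 1)
    (a b : Fin D → ℂ)
    (ha : star a ⬝ᵥ a = 1) (hb : star b ⬝ᵥ b = 1) :
    (∀ U : Matrix (Fin D) (Fin D) ℂ, Uᴴ * U = 1 →
        star a ⬝ᵥ (Uᴴ * ρ * U) *ᵥ a = star b ⬝ᵥ (U * σ * Uᴴ) *ᵥ b) ↔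
      ∃ α : ℝ, -(1 / ((D : ℝ) - 1)) ≤ α ∧ α ≤ 1 ∧
        ρ = (((1 - α) / D : ℝ) : ℂ) • (1 : Matrix (Fin D) (Fin D) ℂ) +
              (α : ℂ) • vecMulVec b (star b) ∧
        σ = (((1 - α) / D : ℝ) : ℂ) • (1 : Matrix (Fin D) (Fin D) ℂ) +
              (α : ℂ) • vecMulVec a (star a) := by
  have hD1pos : (0:ℝ) < (D:ℝ) - 1 := by
    have : (2:ℝ) ≤ (D:ℝ) := by exact_mod_cast hD
    linarith
  have hDpos : (0:ℝ) < (D:ℝ) := by linarith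
  constructor
  · intro h
    -- the key relation
    have hK : ∀ u w : Fin D → ℂ, star u ⬝ᵥ u = 1 → star w ⬝ᵥ w = 1 →
        star u ⬝ᵥ b = star a ⬝ᵥ w →
        star u ⬝ᵥ ρ *ᵥ u = star w ⬝ᵥ σ *ᵥ w := by
      intro u w hu hw hdot
      obtain ⟨U, hU, hUa, hUw⟩ := exists_unitary_two hD a w u b ha hw hu hb hdot.symm
      have hh := h U hU
      rw [conj_dot] at hh
      rw [show U * σ * Uᴴ = Uᴴᴴ * σ * Uᴴ by rw [Matrix.conjTranspose_conjTranspose]] at hh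
      rw [conj_dot] at hh
      have hUb : Uᴴ *ᵥ b = w := by
        rw [← hUw, Matrix.mulVec_mulVec, hU, Matrix.one_mulVec]
      rw [hUa, hUb] at hh
      exact hh
    -- orthonormal companions
    set i0 : Fin D := ⟨0, by omega⟩ with hi0
    set i1 : Fin D := ⟨1, by omega⟩ with hi1
    have hne : i1 ≠ i0 := by simp [hi0, hi1, Fin.ext_iff]
    obtain ⟨f, hf, hf0⟩ := exists_onb_one hD b hb
    obtain ⟨g, hg, hg0⟩ := exists_onb_one hD a ha
    set f1 : Fin D → ℂ := f i1 with hf1def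
    set g1 : Fin D → ℂ := g i1 with hg1def
    have hf1unit : star f1 ⬝ᵥ f1 = 1 := by
      rw [hf1def]; rw [hf i1 i1]; simp
    have hg1unit : star g1 ⬝ᵥ g1 = 1 := by
      rw [hg1def]; rw [hg i1 i1]; simp
    have hf1b : star f1 ⬝ᵥ b = 0 := by
      rw [hf1def, ← hf0]; rw [hf i1 i0]; simp [hne]
    have hag1 : star a ⬝ᵥ g1 = 0 := by
      rw [hg1def, ← hg0]; rw [hg i0 i1]; simp [hne.symm]
    have hg1a : star g1 ⬝ᵥ a = 0 := by
      rw [dot_conj a g1, hag1, star_zero]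
    have hbf1 : star b ⬝ᵥ f1 = 0 := by
      rw [dot_conj f1 b, hf1b, star_zero]
    -- companion vector construction
    have hcomp : ∀ z : ℂ, Complex.normSq z ≤ 1 → ∀ x x1 : Fin D → ℂ,
        star x ⬝ᵥ x = 1 → star x1 ⬝ᵥ x1 = 1 → star x ⬝ᵥ x1 = 0 → star x1 ⬝ᵥ x = 0 →
        star x ⬝ᵥ (z • x + (Real.sqrt (1 - Complex.normSq z) : ℂ) • x1) = z ∧
        star (z • x + (Real.sqrt (1 - Complex.normSq z) : ℂ) • x1) ⬝ᵥ
          (z • x + (Real.sqrt (1 - Complex.normSq z) : ℂ) • x1) = 1 := by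
      intro z hz x x1 hx hx1 hxx1 hx1x
      have hs2 : ((Real.sqrt (1 - Complex.normSq z) : ℂ)) * ((Real.sqrt (1 - Complex.normSq z) : ℂ))
          = ((1 - Complex.normSq z : ℝ) : ℂ) := by
        rw [← Complex.ofReal_mul, Real.mul_self_sqrt (by linarith)]
      have hsstar : star ((Real.sqrt (1 - Complex.normSq z) : ℂ))
          = ((Real.sqrt (1 - Complex.normSq z) : ℂ)) := by simp [Complex.star_def]
      constructor
      · rw [dotProduct_add, dotProduct_smul, dotProduct_smul, hx, hxx1]
        simp
      · rw [dot_combo, hx, hx1, hxx1, hx1x, hsstar, hs2, ← normSq_cast]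
        push_cast
        ring
    -- hypothesis for the structure lemma, ρ side
    have hKρ : ∀ u u' : Fin D → ℂ, star u ⬝ᵥ u = 1 → star u' ⬝ᵥ u' = 1 →
        star u ⬝ᵥ b = star u' ⬝ᵥ b →
        star u ⬝ᵥ ρ *ᵥ u = star u' ⬝ᵥ ρ *ᵥ u' := by
      intro u u' hu hu' hdot
      set z : ℂ := star u ⬝ᵥ b with hz
      have hz1 : Complex.normSq z ≤ 1 := normSq_dot_le_one u b hu hb
      obtain ⟨hw1, hw2⟩ := hcomp z hz1 a g1 ha hg1unit hag1 hg1a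
      set w : Fin D → ℂ := z • a + (Real.sqrt (1 - Complex.normSq z) : ℂ) • g1 with hwdef
      have e1 := hK u w hu hw2 (by rw [← hz, hw1])
      have e2 := hK u' w hu' hw2 (by rw [← hdot, hw1])
      rw [e1, e2]
    -- hypothesis for the structure lemma, σ side
    have hKσ : ∀ w w' : Fin D → ℂ, star w ⬝ᵥ w = 1 → star w' ⬝ᵥ w' = 1 →
        star w ⬝ᵥ a = star w' ⬝ᵥ a →
        star w ⬝ᵥ σ *ᵥ w = star w' ⬝ᵥ σ *ᵥ w' := by
      intro w w' hw hw' hdot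
      set y : ℂ := star w ⬝ᵥ a with hy
      have hy1 : Complex.normSq y ≤ 1 := normSq_dot_le_one w a hw ha
      have hy1' : Complex.normSq (star y) ≤ 1 := by
        rwa [Complex.star_def, Complex.normSq_conj]
      obtain ⟨hu1, hu2⟩ := hcomp y hy1 b f1 hb hf1unit hbf1 hf1b
      set u : Fin D → ℂ := y • b + (Real.sqrt (1 - Complex.normSq y) : ℂ) • f1 with hudef
      have haw : star a ⬝ᵥ w = star y := by rw [hy]; exact dot_conj w a
      have haw' : star a ⬝ᵥ w' = star y := by rw [hdot]; exact dot_conj w' a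
      have e1 := hK u w hu2 hw (by rw [dot_conj b u, hu1, haw])
      have e2 := hK u w' hu2 hw' (by rw [dot_conj b u, hu1, haw'])
      rw [← e1, e2]
    -- apply the structure lemma
    have hρeq := structure_lemma ρ b f1 hb hf1unit hf1b hKρ
    have hσeq := structure_lemma σ a g1 ha hg1unit hg1a hKσ
    set βρ : ℂ := star b ⬝ᵥ ρ *ᵥ b with hβρ
    set cρ : ℂ := star f1 ⬝ᵥ ρ *ᵥ f1 with hcρ
    set βσ : ℂ := star a ⬝ᵥ σ *ᵥ a with hβσ
    set cσ : ℂ := star g1 ⬝ᵥ σ *ᵥ g1 with hcσ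
    have hββ : βρ = βσ := hK b a hb ha (by rw [hb, ha])
    have hcc : cρ = cσ := hK f1 g1 hf1unit hg1unit (by rw [hf1b, hag1])
    -- positivity facts
    have hβ0 : 0 ≤ βρ := hρ.dotProduct_mulVec_nonneg b
    have hc0 : 0 ≤ cρ := hρ.dotProduct_mulVec_nonneg f1
    rw [Complex.le_def] at hβ0 hc0
    have hβim : βρ.im = 0 := by simpa using hβ0.2.symm
    have hcim : cρ.im = 0 := by simpa using hc0.2.symm
    have hβre : 0 ≤ βρ.re := by simpa using hβ0.1
    have hcre : 0 ≤ cρ.re := by simpa using hc0.1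
    -- trace condition
    have h1 : ρ.trace = cρ * (D:ℂ) + (βρ - cρ) := by
      rw [hρeq, Matrix.trace_add, Matrix.trace_smul, Matrix.trace_smul, Matrix.trace_one,
        trace_vmv, hb]
      simp [smul_eq_mul]
    have htr : cρ * (D:ℂ) + (βρ - cρ) = 1 := h1.symm.trans hρtr
    have htr_re : cρ.re * (D:ℝ) + (βρ.re - cρ.re) = 1 := by
      have := congrArg Complex.re htr
      simpa [Complex.add_re, Complex.sub_re, Complex.mul_re, Complex.natCast_re,
        Complex.natCast_im, hcim, hβim] using this
    refine ⟨βρ.re - cρ.re, ?_, ?_, ?_, ?_⟩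
    · rw [neg_le, le_div_iff₀ hD1pos]
      nlinarith [mul_nonneg hβre hDpos.le]
    · nlinarith [mul_nonneg hcre hDpos.le]
    · have hceq : (((1 - (βρ.re - cρ.re)) / D : ℝ) : ℂ) = cρ := by
        apply Complex.ext
        · simp only [Complex.ofReal_re]
          field_simp
          linarith [htr_re]
        · simp [hcim]
      have hbceq : ((βρ.re - cρ.re : ℝ) : ℂ) = βρ - cρ := by
        apply Complex.ext <;> simp [Complex.sub_re, Complex.sub_im, hβim, hcim]
      rw [hceq, hbceq]
      exact hρeq
    · have hceq : (((1 - (βρ.re - cρ.re)) / D : ℝ) : ℂ) = cρ := by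
        apply Complex.ext
        · simp only [Complex.ofReal_re]
          field_simp
          linarith [htr_re]
        · simp [hcim]
      have hbceq : ((βρ.re - cρ.re : ℝ) : ℂ) = βρ - cρ := by
        apply Complex.ext <;> simp [Complex.sub_re, Complex.sub_im, hβim, hcim]
      rw [hceq, hbceq, hββ, hcc]
      exact hσeq
  · rintro ⟨α, hα1, hα2, hρe, hσe⟩ U hU
    have hUU : U * Uᴴ = 1 := mul_eq_one_comm.mp hU
    rw [hρe, hσe]
    have expand : ∀ (V W M : Matrix (Fin D) (Fin D) ℂ) (x : Fin D → ℂ) (c d : ℂ),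
        star x ⬝ᵥ (V * (c • 1 + d • M) * W) *ᵥ x
          = c * (star x ⬝ᵥ (V * W) *ᵥ x) + d * (star x ⬝ᵥ (V * M * W) *ᵥ x) := by
      intro V W M x c d
      rw [Matrix.mul_add, Matrix.add_mul, Matrix.mul_smul, Matrix.smul_mul, Matrix.mul_smul,
        Matrix.smul_mul, Matrix.mul_one, Matrix.add_mulVec, Matrix.smul_mulVec,
        Matrix.smul_mulVec, dotProduct_add, dotProduct_smul, dotProduct_smul,
        smul_eq_mul, smul_eq_mul]
    rw [expand, expand, hU, hUU]
    rw [show U * vecMulVec a (star a) * Uᴴ = Uᴴᴴ * vecMulVec a (star a) * Uᴴ by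
      rw [Matrix.conjTranspose_conjTranspose]]
    rw [conj_dot, conj_dot, dot_vecMulVec, dot_vecMulVec, Matrix.one_mulVec, Matrix.one_mulVec, ha, hb]
    set q : ℂ := star b ⬝ᵥ (U *ᵥ a) with hq
    have e1 : star (U *ᵥ a) ⬝ᵥ b = star q := by rw [hq]; exact dot_conj b (U *ᵥ a)
    have e2 : star (Uᴴ *ᵥ b) ⬝ᵥ a = q := by
      rw [Matrix.star_mulVec, Matrix.conjTranspose_conjTranspose, ← dotProduct_mulVec]
    have e3 : star a ⬝ᵥ (Uᴴ *ᵥ b) = star q := by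
      rw [dot_conj (Uᴴ *ᵥ b) a, e2]
    rw [e1, e2, e3]
    ring
end

section
/- Let H be a separable infinite-dimensional complex Hilbert space. Let (v_i)_{i∈ℕ} and (u_i)_{i∈ℕ} be orthonormal sequences in H, and let p, q : ℕ → ℝ be nonnegative summable sequences with Σ_i p_i = 1 and Σ_i q_i = 1. Define the bounded operators ρ x = Σ_i p_i ⟨v_i, x⟩ v_i and σ x = Σ_i q_i ⟨u_i, x⟩ u_i. Let a, b ∈ H be unit vectors. Then ⟨a, U* ρ U a⟩ = ⟨b, U σ U* b⟩ holds for every unitary operator U on H if and only if ρ x = ⟨b, x⟩ b and σ x = ⟨a, x⟩ a for all x ∈ H, i.e., ρ and σ are the rank-one orthogonal projections onto the spans of b and a respectively. -/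
open ContinuousLinearMap

noncomputable section

namespace Stmt7Aux

variable {H : Type*} [NormedAddCommGroup H] [InnerProductSpace ℂ H]

local notation "⟪" x ", " y "⟫" => @inner ℂ _ _ x y

lemma orthonormal_pair {a y : H} (ha : ‖a‖ = 1) (hy : ‖y‖ = 1) (hay : ⟪a, y⟫ = 0) :
    Orthonormal ℂ ((↑) : ({a, y} : Set H) → H) := by
  classical
  have hne : a ≠ y := by
    intro h
    rw [h, inner_self_eq_norm_sq_to_K, hy] at hay
    norm_num at hay
  have hya : ⟪y, a⟫ = 0 := by rw [← inner_conj_symm, hay, map_zero]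
  rw [orthonormal_subtype_iff_ite]
  intro v hv w hw
  rcases hv with rfl | hv
  · rcases hw with rfl | hw
    · simp [inner_self_eq_norm_sq_to_K, ha]
    · rw [Set.mem_singleton_iff] at hw; subst hw
      simp [hay, hne]
  · rw [Set.mem_singleton_iff] at hv; subst hv
    rcases hw with rfl | hw
    · simp [hya, hne.symm]
    · rw [Set.mem_singleton_iff] at hw; subst hw
      simp [inner_self_eq_norm_sq_to_K, hy]

lemma countable_of_orthonormal [TopologicalSpace.SeparableSpace H] {s : Set H}
    (hs : Orthonormal ℂ ((↑) : s → H)) : s.Countable := by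
  classical
  rw [orthonormal_subtype_iff_ite] at hs
  have hdist : ∀ p ∈ s, ∀ q ∈ s, p ≠ q → 1 ≤ dist p q := by
    intro p hp q hq hpq
    have h1 : ⟪p, q⟫ = 0 := by simpa [hpq] using hs p hp q hq
    have hp1 : ⟪p, p⟫ = 1 := by simpa using hs p hp p hp
    have hq1 : ⟪q, q⟫ = 1 := by simpa using hs q hq q hq
    have hnp : ‖p‖ ^ 2 = 1 := by
      have := inner_self_eq_norm_sq_to_K (𝕜 := ℂ) p
      rw [hp1] at this
      exact_mod_cast congrArg Complex.re this.symm
    have hnq : ‖q‖ ^ 2 = 1 := by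
      have := inner_self_eq_norm_sq_to_K (𝕜 := ℂ) q
      rw [hq1] at this
      exact_mod_cast congrArg Complex.re this.symm
    have h2 : ‖p - q‖ ^ 2 = 2 := by
      rw [norm_sub_sq (𝕜 := ℂ), h1, hnp, hnq]
      norm_num
    rw [dist_eq_norm]
    nlinarith [norm_nonneg (p - q)]
  have hpd : s.PairwiseDisjoint (fun p => Metric.ball p (1/2 : ℝ)) := by
    intro p hp q hq hpq
    apply Metric.ball_disjoint_ball
    have := hdist p hp q hq hpq
    linarith
  exact hpd.countable_of_isOpen (fun p _ => Metric.isOpen_ball)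
    (fun p _ => Metric.nonempty_ball.2 (by norm_num))

lemma hb_infinite [CompleteSpace H] (hinf : ¬ FiniteDimensional ℂ H) {ι : Type*}
    (B : HilbertBasis ι ℂ H) : Infinite ι := by
  rw [← not_finite_iff_infinite]
  intro hfin
  have hfr : (Set.range ⇑B).Finite := Set.finite_range _
  have hK : FiniteDimensional ℂ (Submodule.span ℂ (Set.range ⇑B)) :=
    FiniteDimensional.span_of_finite ℂ hfr
  have hcl : IsClosed ((Submodule.span ℂ (Set.range ⇑B)) : Set H) :=
    Submodule.closed_of_finiteDimensional _
  have hd := B.dense_span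
  have htop : Submodule.span ℂ (Set.range ⇑B) = ⊤ := by
    rw [← hcl.submodule_topologicalClosure_eq]
    exact hd
  rw [htop] at hK
  exact hinf (Module.Finite.equiv (Submodule.topEquiv))

lemma exists_seq_orthogonal [CompleteSpace H] [TopologicalSpace.SeparableSpace H]
    (hinf : ¬ FiniteDimensional ℂ H) (b : H) :
    ∃ f : ℕ → H, Orthonormal ℂ f ∧ ∀ n, ⟪b, f n⟫ = 0 := by
  set K : Submodule ℂ H := ℂ ∙ b with hK
  haveI : CompleteSpace K := FiniteDimensional.complete ℂ K
  haveI : CompleteSpace Kᗮ := K.isClosed_orthogonal.completeSpace_coe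
  haveI : SecondCountableTopology H := UniformSpace.secondCountable_of_separable H
  haveI : TopologicalSpace.SeparableSpace Kᗮ :=
    TopologicalSpace.SecondCountableTopology.to_separableSpace
  have horthinf : ¬ FiniteDimensional ℂ Kᗮ := by
    intro hfd
    have hsup : K ⊔ Kᗮ = ⊤ := Submodule.sup_orthogonal_of_hasOrthogonalProjection
    have : FiniteDimensional ℂ (K ⊔ Kᗮ : Submodule ℂ H) := inferInstance
    rw [hsup] at this
    exact hinf (Module.Finite.equiv (Submodule.topEquiv))
  obtain ⟨w, B, hB⟩ := exists_hilbertBasis ℂ Kᗮ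
  haveI := hb_infinite horthinf B
  have hw : w.Infinite := Set.infinite_coe_iff.mp ‹_›
  let g := hw.natEmbedding
  have horth : Orthonormal ℂ ((↑) : w → Kᗮ) := hB ▸ B.orthonormal
  refine ⟨fun n => ((g n : Kᗮ) : H), ?_, ?_⟩
  · have h1 : Orthonormal ℂ (fun i : w => (i : Kᗮ)) := horth
    have h2 : Orthonormal ℂ (fun n : ℕ => ((g n : Kᗮ))) := h1.comp g g.injective
    rw [orthonormal_iff_ite] at h2 ⊢
    intro i j
    have := h2 i j
    rwa [Submodule.coe_inner] at this
  · intro n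
    have hmem : ((g n : Kᗮ) : H) ∈ Kᗮ := ((g n : Kᗮ)).2
    exact (Submodule.mem_orthogonal K _).mp hmem b (Submodule.mem_span_singleton_self b)

lemma summable_terms [CompleteSpace H] {v : ℕ → H} (hv : Orthonormal ℂ v) {p : ℕ → ℝ}
    (hp0 : ∀ i, 0 ≤ p i) (hpsum : Summable p) (x : H) :
    Summable (fun i => ((p i : ℂ) * ⟪v i, x⟫) • v i) := by
  apply Summable.of_norm_bounded (g := fun i => p i * ‖x‖) (hpsum.mul_right _)
  intro i
  rw [norm_smul, norm_mul, hv.1 i, mul_one, Complex.norm_real, Real.norm_eq_abs,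
    abs_of_nonneg (hp0 i)]
  have := norm_inner_le_norm (𝕜 := ℂ) (v i) x
  rw [hv.1 i, one_mul] at this
  exact mul_le_mul_of_nonneg_left this (hp0 i)

lemma summable_sq {v : ℕ → H} (hv : Orthonormal ℂ v) {p : ℕ → ℝ}
    (hp0 : ∀ i, 0 ≤ p i) (hpsum : Summable p) {x : H} (hx : ‖x‖ ≤ 1) :
    Summable (fun i => p i * ‖⟪v i, x⟫‖ ^ 2) := by
  apply Summable.of_nonneg_of_le (fun i => mul_nonneg (hp0 i) (by positivity)) _ hpsum
  intro i
  have h1 := norm_inner_le_norm (𝕜 := ℂ) (v i) x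
  rw [hv.1 i, one_mul] at h1
  have h2 : ‖⟪v i, x⟫‖ ^ 2 ≤ 1 := by nlinarith [norm_nonneg (⟪v i, x⟫)]
  nlinarith [hp0 i]

lemma quad [CompleteSpace H] {v : ℕ → H} (hv : Orthonormal ℂ v) {p : ℕ → ℝ}
    (hp0 : ∀ i, 0 ≤ p i) (hpsum : Summable p) (x : H) :
    ⟪x, (∑' i, ((p i : ℂ) * ⟪v i, x⟫) • v i)⟫
      = ((∑' i, p i * ‖⟪v i, x⟫‖ ^ 2 : ℝ) : ℂ) := by
  have hsum := summable_terms hv hp0 hpsum x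
  have h1 : ⟪x, (∑' i, ((p i : ℂ) * ⟪v i, x⟫) • v i)⟫
      = ∑' i, ((p i : ℂ) * ⟪v i, x⟫) * ⟪x, v i⟫ := by
    rw [show ⟪x, (∑' i, ((p i : ℂ) * ⟪v i, x⟫) • v i)⟫
        = innerSL ℂ x (∑' i, ((p i : ℂ) * ⟪v i, x⟫) • v i) from rfl,
      (innerSL ℂ x).map_tsum hsum]
    congr 1
    ext i
    simp [inner_smul_right, mul_comm]
  rw [h1, Complex.ofReal_tsum]
  congr 1
  ext i
  rw [← inner_conj_symm x (v i), mul_assoc, Complex.mul_conj, Complex.normSq_eq_norm_sq]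
  push_cast
  ring

lemma key [CompleteSpace H] {v : ℕ → H} (hv : Orthonormal ℂ v) {p : ℕ → ℝ}
    (hp0 : ∀ i, 0 ≤ p i) (hpsum : Summable p) (hp1 : ∑' i, p i = 1)
    {b : H} (hb : ‖b‖ = 1)
    (h0 : ∀ x : H, ‖x‖ = 1 → ⟪b, x⟫ = 0 → ∑' i, p i * ‖⟪v i, x⟫‖ ^ 2 = 0) :
    ∀ x : H, (∑' i, ((p i : ℂ) * ⟪v i, x⟫) • v i) = ⟪b, x⟫ • b := by
  have hvz : ∀ i, p i ≠ 0 → ∀ x : H, ⟪b, x⟫ = 0 → ⟪v i, x⟫ = 0 := by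
    intro i hpi x hbx
    rcases eq_or_ne x 0 with rfl | hx0
    · simp
    · have hnx : ‖x‖ ≠ 0 := norm_ne_zero_iff.mpr hx0
      set y : H := ((‖x‖⁻¹ : ℝ) : ℂ) • x with hy
      have hyn : ‖y‖ = 1 := by
        rw [hy, norm_smul, Complex.norm_real, Real.norm_eq_abs,
          abs_of_nonneg (inv_nonneg.mpr (norm_nonneg x)), inv_mul_cancel₀ hnx]
      have hby : ⟪b, y⟫ = 0 := by
        rw [hy, inner_smul_right, hbx, mul_zero]
      have hsm := summable_sq hv hp0 hpsum (le_of_eq hyn)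
      have hz := h0 y hyn hby
      have hterm : p i * ‖⟪v i, y⟫‖ ^ 2 = 0 := by
        have hle : p i * ‖⟪v i, y⟫‖ ^ 2 ≤ 0 := hz ▸ Summable.le_tsum hsm i
          (fun j _ => mul_nonneg (hp0 j) (by positivity))
        have hge : 0 ≤ p i * ‖⟪v i, y⟫‖ ^ 2 := mul_nonneg (hp0 i) (by positivity)
        linarith
      have hiy : ⟪v i, y⟫ = 0 := by
        rcases mul_eq_zero.mp hterm with h | h
        · exact absurd h hpi
        · rwa [pow_eq_zero_iff (by norm_num), norm_eq_zero] at h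
      have : x = (‖x‖ : ℂ) • y := by
        rw [hy, smul_smul]
        norm_cast
        rw [mul_inv_cancel₀ hnx]
        norm_num
      rw [this, inner_smul_right, hiy, mul_zero]
  have hvb : ∀ i, p i ≠ 0 → ∃ c : ℂ, v i = c • b ∧ ‖c‖ = 1 := by
    intro i hpi
    set K : Submodule ℂ H := ℂ ∙ b with hKdef
    haveI : CompleteSpace K := FiniteDimensional.complete ℂ K
    have hmem : v i ∈ Kᗮᗮ := by
      rw [Submodule.mem_orthogonal]
      intro z hz
      have hbz : ⟪b, z⟫ = 0 :=
        (Submodule.mem_orthogonal K z).mp hz b (Submodule.mem_span_singleton_self b)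
      have := hvz i hpi z hbz
      rw [← inner_conj_symm, this, map_zero]
    rw [Submodule.orthogonal_orthogonal] at hmem
    obtain ⟨c, hc⟩ := Submodule.mem_span_singleton.mp hmem
    refine ⟨c, hc.symm, ?_⟩
    have : ‖v i‖ = ‖c‖ * ‖b‖ := by rw [← hc, norm_smul]
    rw [hv.1 i, hb, mul_one] at this
    exact this.symm
  intro x
  have hterm : ∀ i, ((p i : ℂ) * ⟪v i, x⟫) • v i = (p i : ℂ) • (⟪b, x⟫ • b) := by
    intro i
    rcases eq_or_ne (p i) 0 with h | h
    · simp [h]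
    · obtain ⟨c, hc, hc1⟩ := hvb i h
      rw [hc, inner_smul_left, smul_smul, smul_smul]
      congr 1
      have hcc : (starRingEnd ℂ) c * c = 1 := by
        rw [RCLike.conj_mul, hc1]
        norm_num
      calc (p i : ℂ) * ((starRingEnd ℂ) c * ⟪b, x⟫) * c
          = (p i : ℂ) * ⟪b, x⟫ * ((starRingEnd ℂ) c * c) := by ring
        _ = (p i : ℂ) * ⟪b, x⟫ := by rw [hcc, mul_one]
  have hsc : Summable (fun i => (p i : ℂ)) :=
    hpsum.map Complex.ofRealHom.toAddMonoidHom Complex.continuous_ofReal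
  rw [tsum_congr hterm, Summable.tsum_smul_const hsc, ← Complex.ofReal_tsum, hp1,
    Complex.ofReal_one, one_smul]

lemma exists_unitary [CompleteSpace H] [TopologicalSpace.SeparableSpace H]
    (hinf : ¬ FiniteDimensional ℂ H) {a y x b : H}
    (ha : ‖a‖ = 1) (hy : ‖y‖ = 1) (hx : ‖x‖ = 1) (hb : ‖b‖ = 1)
    (hay : ⟪a, y⟫ = 0) (hxb : ⟪x, b⟫ = 0) :
    ∃ U : H ≃ₗᵢ[ℂ] H, U a = x ∧ U y = b := by
  classical
  obtain ⟨w, B, hsub, hB⟩ := (orthonormal_pair ha hy hay).exists_hilbertBasis_extension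
  obtain ⟨w', B', hsub', hB'⟩ := (orthonormal_pair hx hb hxb).exists_hilbertBasis_extension
  haveI : Infinite w := hb_infinite hinf B
  haveI : Infinite w' := hb_infinite hinf B'
  haveI : Countable w := (countable_of_orthonormal (hB ▸ B.orthonormal)).to_subtype
  haveI : Countable w' := (countable_of_orthonormal (hB' ▸ B'.orthonormal)).to_subtype
  obtain ⟨d⟩ := nonempty_denumerable ↥w
  obtain ⟨d'⟩ := nonempty_denumerable ↥w'
  have e0 : ↥w ≃ ↥w' := (@Denumerable.eqv _ d).trans (@Denumerable.eqv _ d').symm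
  have hane : a ≠ y := by
    intro h
    rw [h, inner_self_eq_norm_sq_to_K, hy] at hay
    norm_num at hay
  have hxne : x ≠ b := by
    intro h
    rw [h, inner_self_eq_norm_sq_to_K, hb] at hxb
    norm_num at hxb
  let A : w := ⟨a, hsub (by simp)⟩
  let Y : w := ⟨y, hsub (by simp)⟩
  let X : w' := ⟨x, hsub' (by simp)⟩
  let Bb : w' := ⟨b, hsub' (by simp)⟩
  have hAY : A ≠ Y := fun h => hane (congrArg Subtype.val h)
  have hXB : X ≠ Bb := fun h => hxne (congrArg Subtype.val h)
  let e1 : ↥w ≃ ↥w' := e0.trans (Equiv.swap (e0 A) X)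
  have he1A : e1 A = X := by simp [e1, Equiv.swap_apply_left]
  have h1Y : e1 Y ≠ X := by
    rw [← he1A]
    exact fun h => hAY (e1.injective h).symm
  let e : ↥w ≃ ↥w' := e1.trans (Equiv.swap (e1 Y) Bb)
  have heA : e A = X := by
    simp only [e, Equiv.trans_apply, he1A]
    exact Equiv.swap_apply_of_ne_of_ne (Ne.symm h1Y) hXB
  have heY : e Y = Bb := by
    simp only [e, Equiv.trans_apply]
    exact Equiv.swap_apply_left _ _
  have horth : Orthonormal ℂ (fun i : w => (B' (e i))) := B'.orthonormal.comp e e.injective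
  have hrange : Set.range (fun i : w => B' (e i)) = Set.range ⇑B' := by
    ext z
    constructor
    · rintro ⟨i, rfl⟩; exact ⟨e i, rfl⟩
    · rintro ⟨j, rfl⟩; exact ⟨e.symm j, by simp⟩
  have hsp : ⊤ ≤ (Submodule.span ℂ (Set.range fun i : w => B' (e i))).topologicalClosure := by
    rw [hrange, B'.dense_span]
  let B'' := HilbertBasis.mk horth hsp
  let U := B.repr.trans B''.repr.symm
  have hU : ∀ i : w, U (B i) = B' (e i) := by
    intro i
    have h1 : B.repr (B i) = lp.single 2 i 1 := B.repr_self i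
    have h2 : B''.repr.symm (lp.single 2 i 1) = B'' i := B''.repr_symm_single i
    have h3 : (B'' : w → H) i = B' (e i) := by
      rw [HilbertBasis.coe_mk]
    simp only [U, LinearIsometryEquiv.trans_apply, h1, h2, h3]
  have hBA : B A = a := by rw [hB]
  have hBY : B Y = y := by rw [hB]
  have hB'X : B' X = x := by rw [hB']
  have hB'B : B' Bb = b := by rw [hB']
  refine ⟨U, ?_, ?_⟩
  · have := hU A
    rwa [hBA, heA, hB'X] at this
  · have := hU Y
    rwa [hBY, heY, hB'B] at this

end Stmt7Aux

end

open Stmt7Aux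

/-- Lemma 4 of the paper (infinite-dimensional case): in a separable infinite-dimensional
complex Hilbert space, for density operators `ρ = Σ p_i |v_i⟩⟨v_i|` and
`σ = Σ q_i |u_i⟩⟨u_i|` given by their spectral decompositions and unit vectors `a`, `b`,
the relation `⟨a, U* ρ U a⟩ = ⟨b, U σ U* b⟩` holds for every unitary `U` iff `ρ` and `σ`
are the rank-one orthogonal projections onto the spans of `b` and `a` respectively. -/
theorem stmt_7 {H : Type*} [NormedAddCommGroup H] [InnerProductSpace ℂ H] [CompleteSpace H]
    [TopologicalSpace.SeparableSpace H] (hinf : ¬ FiniteDimensional ℂ H)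
    (v u : ℕ → H) (hv : Orthonormal ℂ v) (hu : Orthonormal ℂ u)
    (p q : ℕ → ℝ) (hp0 : ∀ i, 0 ≤ p i) (hq0 : ∀ i, 0 ≤ q i)
    (hpsum : Summable p) (hqsum : Summable q)
    (hp1 : ∑' i, p i = 1) (hq1 : ∑' i, q i = 1)
    (ρ σ : H →L[ℂ] H)
    (hρ : ∀ x : H, ρ x = ∑' i, ((p i : ℂ) * (inner ℂ (v i) x : ℂ)) • v i)
    (hσ : ∀ x : H, σ x = ∑' i, ((q i : ℂ) * (inner ℂ (u i) x : ℂ)) • u i)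
    (a b : H) (ha : ‖a‖ = 1) (hb : ‖b‖ = 1) :
    (∀ U : H →L[ℂ] H,
        (ContinuousLinearMap.adjoint U) ∘L U = 1 → U ∘L (ContinuousLinearMap.adjoint U) = 1 →
        (inner ℂ a ((ContinuousLinearMap.adjoint U) (ρ (U a))) : ℂ) =
          (inner ℂ b (U (σ ((ContinuousLinearMap.adjoint U) b))) : ℂ)) ↔
      ((∀ x : H, ρ x = (inner ℂ b x : ℂ) • b) ∧ (∀ x : H, σ x = (inner ℂ a x : ℂ) • a)) := by
  constructor
  · intro hU
    set Sρ : H → ℝ := fun x => ∑' i, p i * ‖(inner ℂ (v i) x : ℂ)‖ ^ 2 with hSρdef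
    set Sσ : H → ℝ := fun y => ∑' i, q i * ‖(inner ℂ (u i) y : ℂ)‖ ^ 2 with hSσdef
    have hbridge : ∀ x y : H, ‖x‖ = 1 → ‖y‖ = 1 → (inner ℂ b x : ℂ) = 0 →
        (inner ℂ a y : ℂ) = 0 → Sρ x = Sσ y := by
      intro x y hx hy hbx hay
      have hxb : (inner ℂ x b : ℂ) = 0 := by rw [← inner_conj_symm, hbx, map_zero]
      obtain ⟨U, hUa, hUy⟩ := exists_unitary hinf ha hy hx hb hay hxb
      let T : H →L[ℂ] H := U.toLinearIsometry.toContinuousLinearMap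
      have hTapp : ∀ z, T z = U z := fun z => rfl
      have hadj : ContinuousLinearMap.adjoint T
          = U.symm.toLinearIsometry.toContinuousLinearMap := by
        symm
        rw [ContinuousLinearMap.eq_adjoint_iff]
        intro z w
        calc (inner ℂ (U.symm z) w : ℂ) = inner ℂ (U (U.symm z)) (U w) :=
              (U.inner_map_map _ _).symm
          _ = inner ℂ z (T w) := by rw [U.apply_symm_apply]; rfl
      have h1 : ContinuousLinearMap.adjoint T ∘L T = 1 := by
        ext z
        simp only [ContinuousLinearMap.comp_apply, hadj, ContinuousLinearMap.one_apply,
          LinearIsometry.coe_toContinuousLinearMap, LinearIsometryEquiv.coe_toLinearIsometry]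
        exact U.symm_apply_apply z
      have h2 : T ∘L ContinuousLinearMap.adjoint T = 1 := by
        ext z
        simp only [ContinuousLinearMap.comp_apply, hadj, ContinuousLinearMap.one_apply,
          LinearIsometry.coe_toContinuousLinearMap, LinearIsometryEquiv.coe_toLinearIsometry]
        exact U.apply_symm_apply z
      have hmain := hU T h1 h2
      have hTa : T a = x := by rw [hTapp, hUa]
      have hadjb : (ContinuousLinearMap.adjoint T) b = y := by
        rw [hadj]
        show U.symm b = y
        rw [← hUy, U.symm_apply_apply]
      have hLHS : (inner ℂ a ((ContinuousLinearMap.adjoint T) (ρ (T a))) : ℂ)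
          = inner ℂ x (ρ x) := by
        rw [hTa, hadj]
        show (inner ℂ a (U.symm (ρ x)) : ℂ) = inner ℂ x (ρ x)
        calc (inner ℂ a (U.symm (ρ x)) : ℂ) = inner ℂ (U a) (U (U.symm (ρ x))) :=
              (U.inner_map_map _ _).symm
          _ = inner ℂ x (ρ x) := by rw [hUa, U.apply_symm_apply]
      have hRHS : (inner ℂ b (T (σ ((ContinuousLinearMap.adjoint T) b))) : ℂ)
          = inner ℂ y (σ y) := by
        rw [hadjb, hTapp, ← hUy]
        exact U.inner_map_map y (σ y)
      rw [hLHS, hRHS] at hmain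
      have hL : (inner ℂ x (ρ x) : ℂ) = ((Sρ x : ℝ) : ℂ) := by
        rw [hρ x]; exact quad hv hp0 hpsum x
      have hR : (inner ℂ y (σ y) : ℂ) = ((Sσ y : ℝ) : ℂ) := by
        rw [hσ y]; exact quad hu hq0 hqsum y
      rw [hL, hR] at hmain
      exact_mod_cast hmain
    obtain ⟨fa, hfaon, hfaorth⟩ := exists_seq_orthogonal hinf a
    obtain ⟨fb, hfbon, hfborth⟩ := exists_seq_orthogonal hinf b
    set c : ℝ := Sσ (fa 0) with hcdef
    have hSρc : ∀ x : H, ‖x‖ = 1 → (inner ℂ b x : ℂ) = 0 → Sρ x = c := by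
      intro x hx hbx
      exact hbridge x (fa 0) hx (hfaon.1 0) hbx (hfaorth 0)
    have hSσc : ∀ y : H, ‖y‖ = 1 → (inner ℂ a y : ℂ) = 0 → Sσ y = c := by
      intro y hy hay
      rw [← hbridge (fb 0) y (hfbon.1 0) hy (hfborth 0) hay]
      exact hSρc (fb 0) (hfbon.1 0) (hfborth 0)
    have hc0 : c = 0 := by
      have hcnn : 0 ≤ c := by
        rw [hcdef, hSσdef]
        exact tsum_nonneg (fun i => mul_nonneg (hq0 i) (by positivity))
      have hN : ∀ N : ℕ, (N : ℝ) * c ≤ 1 := by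
        intro N
        have hsum_each : ∀ n : ℕ, Summable (fun i => p i * ‖(inner ℂ (v i) (fb n) : ℂ)‖ ^ 2) :=
          fun n => summable_sq hv hp0 hpsum (le_of_eq (hfbon.1 n))
        have hswap : ∑ n ∈ Finset.range N, Sρ (fb n)
            = ∑' i, ∑ n ∈ Finset.range N, p i * ‖(inner ℂ (v i) (fb n) : ℂ)‖ ^ 2 :=
          (Summable.tsum_finsetSum (fun n _ => hsum_each n)).symm
        have hLeq : ∑ n ∈ Finset.range N, Sρ (fb n) = (N : ℝ) * c := by
          rw [Finset.sum_congr rfl (fun n _ => hSρc (fb n) (hfbon.1 n) (hfborth n))]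
          rw [Finset.sum_const, Finset.card_range, nsmul_eq_mul]
        have hsumS : Summable (fun i => ∑ n ∈ Finset.range N,
            p i * ‖(inner ℂ (v i) (fb n) : ℂ)‖ ^ 2) :=
          summable_sum (fun n _ => hsum_each n)
        have hbound : ∀ i, ∑ n ∈ Finset.range N, p i * ‖(inner ℂ (v i) (fb n) : ℂ)‖ ^ 2 ≤ p i := by
          intro i
          rw [← Finset.mul_sum]
          have hbessel : ∑ n ∈ Finset.range N, ‖(inner ℂ (fb n) (v i) : ℂ)‖ ^ 2 ≤ ‖v i‖ ^ 2 :=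
            hfbon.sum_inner_products_le (v i)
          have heq : ∑ n ∈ Finset.range N, ‖(inner ℂ (v i) (fb n) : ℂ)‖ ^ 2
              = ∑ n ∈ Finset.range N, ‖(inner ℂ (fb n) (v i) : ℂ)‖ ^ 2 := by
            refine Finset.sum_congr rfl (fun n _ => ?_)
            rw [← inner_conj_symm (v i) (fb n), RCLike.norm_conj]
          rw [heq]
          calc p i * ∑ n ∈ Finset.range N, ‖(inner ℂ (fb n) (v i) : ℂ)‖ ^ 2
              ≤ p i * ‖v i‖ ^ 2 := mul_le_mul_of_nonneg_left hbessel (hp0 i)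
            _ = p i := by rw [hv.1 i]; ring
        calc (N : ℝ) * c = ∑ n ∈ Finset.range N, Sρ (fb n) := hLeq.symm
          _ = ∑' i, ∑ n ∈ Finset.range N, p i * ‖(inner ℂ (v i) (fb n) : ℂ)‖ ^ 2 := hswap
          _ ≤ ∑' i, p i := Summable.tsum_le_tsum hbound hsumS hpsum
          _ = 1 := hp1
      by_contra hc
      have hcpos : 0 < c := lt_of_le_of_ne hcnn (Ne.symm hc)
      obtain ⟨N, hNgt⟩ := exists_nat_gt (1 / c)
      have := hN N
      have h2 : (1 : ℝ) < N * c := by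
        rw [div_lt_iff₀ hcpos] at hNgt
        linarith
      linarith
    constructor
    · intro x
      rw [hρ x]
      exact key hv hp0 hpsum hp1 hb
        (fun z hz hbz => by have h := hSρc z hz hbz; rw [hc0] at h; exact h) x
    · intro x
      rw [hσ x]
      exact key hu hq0 hqsum hq1 ha
        (fun z hz haz => by have h := hSσc z hz haz; rw [hc0] at h; exact h) x
  · rintro ⟨hρb, hσa⟩ U hU1 hU2
    rw [hρb, hσa, map_smul, map_smul, inner_smul_right, inner_smul_right]
    ring
end

section
/- Let D ≥ 2, let ρ be a D×D density matrix, let a, b ∈ ℂ^D be unit vectors, and let r₁, r₂ be real numbers. Set σ = r₁·1 + r₂·|a⟩⟨a|. If ⟨a, U* ρ U a⟩ = ⟨b, U σ U* b⟩ holds for every unitary D×D matrix U, then ρ = r₁·1 + r₂·|b⟩⟨b|. -/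
open Matrix
open scoped ComplexOrder

open scoped InnerProductSpace in
/-- Any unit vector can be mapped to any other unit vector by a unitary matrix. -/
lemma stmt_8_aux_exists_unitary {D : ℕ} (hD : 0 < D) (a v : Fin D → ℂ)
    (ha : star a ⬝ᵥ a = 1) (hv : star v ⬝ᵥ v = 1) :
    ∃ U : Matrix (Fin D) (Fin D) ℂ, Uᴴ * U = 1 ∧ U *ᵥ a = v := by
  classical
  set i0 : Fin D := ⟨0, hD⟩ with hi0
  have card : Module.finrank ℂ (EuclideanSpace ℂ (Fin D)) = Fintype.card (Fin D) := by simp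
  have orth : ∀ (w : Fin D → ℂ), star w ⬝ᵥ w = 1 →
      Orthonormal ℂ (({i0} : Set (Fin D)).restrict
        (fun _ => ((WithLp.equiv 2 (Fin D → ℂ)).symm w))) := by
    intro w hw
    rw [orthonormal_iff_ite]
    rintro ⟨i, hi⟩ ⟨j, hj⟩
    simp only [Set.mem_singleton_iff] at hi hj
    subst hi; subst hj
    simp only [Set.restrict, WithLp.equiv_symm_apply, EuclideanSpace.inner_toLp_toLp, ↓reduceIte]
    show ⟪WithLp.toLp 2 w, WithLp.toLp 2 w⟫_ℂ = 1
    rw [EuclideanSpace.inner_toLp_toLp, dotProduct_comm]; exact hw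
  obtain ⟨Ba, hBa⟩ := (orth a ha).exists_orthonormalBasis_extension_of_card_eq card
  obtain ⟨Bv, hBv⟩ := (orth v hv).exists_orthonormalBasis_extension_of_card_eq card
  set f : EuclideanSpace ℂ (Fin D) ≃ₗᵢ[ℂ] EuclideanSpace ℂ (Fin D) :=
    Ba.repr.trans Bv.repr.symm with hf
  have hfa : f ((WithLp.equiv 2 (Fin D → ℂ)).symm a) = (WithLp.equiv 2 (Fin D → ℂ)).symm v := by
    have h1 : Ba i0 = (WithLp.equiv 2 (Fin D → ℂ)).symm a := hBa i0 rfl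
    have h2 : Bv i0 = (WithLp.equiv 2 (Fin D → ℂ)).symm v := hBv i0 rfl
    rw [← h1, ← h2, hf]
    simp [Ba.repr_self, Bv.repr_symm_single]
  set U : Matrix (Fin D) (Fin D) ℂ :=
    Matrix.toEuclideanLin.symm (f.toLinearEquiv : EuclideanSpace ℂ (Fin D) →ₗ[ℂ]
      EuclideanSpace ℂ (Fin D)) with hUdef
  have hUlin : Matrix.toEuclideanLin U = (f.toLinearEquiv : EuclideanSpace ℂ (Fin D) →ₗ[ℂ]
      EuclideanSpace ℂ (Fin D)) := by
    rw [hUdef, LinearEquiv.apply_symm_apply]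
  have hU : ∀ x : Fin D → ℂ,
      U *ᵥ x = WithLp.equiv 2 (Fin D → ℂ) (f ((WithLp.equiv 2 (Fin D → ℂ)).symm x)) := by
    intro x
    have := Matrix.ofLp_toEuclideanLin_apply U ((WithLp.equiv 2 (Fin D → ℂ)).symm x)
    rw [hUlin] at this
    simpa using this.symm
  have hUa : U *ᵥ a = v := by
    rw [hU a, hfa]; simp
  have key : ∀ x y : Fin D → ℂ, star (U *ᵥ x) ⬝ᵥ (U *ᵥ y) = star x ⬝ᵥ y := by
    intro x y
    rw [hU x, hU y]
    have h1 := EuclideanSpace.inner_toLp_toLp (𝕜 := ℂ)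
      (WithLp.equiv 2 (Fin D → ℂ) (f ((WithLp.equiv 2 (Fin D → ℂ)).symm x)))
      (WithLp.equiv 2 (Fin D → ℂ) (f ((WithLp.equiv 2 (Fin D → ℂ)).symm y)))
    rw [dotProduct_comm, ← h1]
    simp only [WithLp.equiv_apply, WithLp.toLp_ofLp]
    rw [f.inner_map_map]
    rw [dotProduct_comm]; exact EuclideanSpace.inner_toLp_toLp x y
  refine ⟨U, ?_, hUa⟩
  ext i j
  have := key (Pi.single i 1) (Pi.single j 1)
  have hcol : ∀ (k : Fin D) (w : Fin D → ℂ) (M : Matrix (Fin D) (Fin D) ℂ),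
      (M *ᵥ Pi.single k 1) = fun l => M l k := by
    intro k w M
    funext l
    simp [Matrix.mulVec, dotProduct, Pi.single_apply]
  rw [hcol i a U, hcol j a U] at this
  have hlhs : star (fun l => U l i) ⬝ᵥ (fun l => U l j) = (Uᴴ * U) i j := by
    simp [Matrix.mul_apply, dotProduct, Matrix.conjTranspose_apply]
  have hrhs : star (Pi.single i 1 : Fin D → ℂ) ⬝ᵥ Pi.single j 1
      = (1 : Matrix (Fin D) (Fin D) ℂ) i j := by
    simp [dotProduct, Pi.single_apply, Matrix.one_apply, eq_comm]
  rw [hlhs, hrhs] at this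
  exact this

open scoped InnerProductSpace in
/-- A matrix with vanishing quadratic form is zero. -/
lemma stmt_8_aux_quad_zero {D : ℕ} (M : Matrix (Fin D) (Fin D) ℂ)
    (h : ∀ v : Fin D → ℂ, star v ⬝ᵥ M *ᵥ v = 0) : M = 0 := by
  have h2 : Matrix.toEuclideanLin M = 0 := by
    rw [← inner_map_self_eq_zero]
    intro x
    set v : Fin D → ℂ := WithLp.equiv 2 (Fin D → ℂ) x with hvdef
    have hx : x = (WithLp.equiv 2 (Fin D → ℂ)).symm v := by simp [hvdef]
    have h3 : ⟪Matrix.toEuclideanLin M x, x⟫_ℂ = star (M *ᵥ v) ⬝ᵥ v := by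
      rw [EuclideanSpace.inner_eq_star_dotProduct, Matrix.ofLp_toEuclideanLin_apply, dotProduct_comm]
      rfl
    rw [h3]
    have h4 := h v
    have h5 := congrArg star h4
    rw [star_zero] at h5
    rw [← h5]
    simp [dotProduct, star_sum, star_mul', mul_comm]
  exact (LinearEquiv.map_eq_zero_iff Matrix.toEuclideanLin).mp h2

lemma stmt_8_aux_vecMulVec_mulVec {D : ℕ} (a c w : Fin D → ℂ) :
    vecMulVec a c *ᵥ w = (c ⬝ᵥ w) • a := by
  funext i
  simp only [Matrix.mulVec, Matrix.vecMulVec_apply, dotProduct, Pi.smul_apply,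
    smul_eq_mul, Finset.sum_mul]
  exact Finset.sum_congr rfl fun j _ => by ring

/-- First step in the proof of Lemma 4: if `σ = r₁ • 1 + r₂ • |a⟩⟨a|` and
`⟨a, U* ρ U a⟩ = ⟨b, U σ U* b⟩` holds for every unitary `U`, then
`ρ = r₁ • 1 + r₂ • |b⟩⟨b|`. -/
theorem stmt_8 (D : ℕ) (hD : 2 ≤ D)
    (ρ : Matrix (Fin D) (Fin D) ℂ)
    (hρ : ρ.PosSemidef) (hρtr : ρ.trace = 1)
    (a b : Fin D → ℂ)
    (ha : star a ⬝ᵥ a = 1) (hb : star b ⬝ᵥ b = 1)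
    (r₁ r₂ : ℝ)
    (σ : Matrix (Fin D) (Fin D) ℂ)
    (hσ : σ = (r₁ : ℂ) • (1 : Matrix (Fin D) (Fin D) ℂ) + (r₂ : ℂ) • vecMulVec a (star a))
    (h : ∀ U : Matrix (Fin D) (Fin D) ℂ, Uᴴ * U = 1 →
      star a ⬝ᵥ (Uᴴ * ρ * U) *ᵥ a = star b ⬝ᵥ (U * σ * Uᴴ) *ᵥ b) :
    ρ = (r₁ : ℂ) • (1 : Matrix (Fin D) (Fin D) ℂ) + (r₂ : ℂ) • vecMulVec b (star b) := by
  have hD0 : 0 < D := by omega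
  -- quadratic form identity on unit vectors
  have key : ∀ v : Fin D → ℂ, star v ⬝ᵥ v = 1 →
      star v ⬝ᵥ ρ *ᵥ v = r₁ + r₂ * ((star b ⬝ᵥ v) * (star v ⬝ᵥ b)) := by
    intro v hv
    obtain ⟨U, hUu, hUa⟩ := stmt_8_aux_exists_unitary hD0 a v ha hv
    have hUU : U * Uᴴ = 1 := mul_eq_one_comm.mp hUu
    have heq := h U hUu
    -- LHS
    have hL : star a ⬝ᵥ (Uᴴ * ρ * U) *ᵥ a = star v ⬝ᵥ ρ *ᵥ v := by
      rw [← Matrix.mulVec_mulVec, ← Matrix.mulVec_mulVec, Matrix.dotProduct_mulVec,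
        ← Matrix.star_mulVec, hUa]
    -- RHS
    have hR : star b ⬝ᵥ (U * σ * Uᴴ) *ᵥ b
        = r₁ + r₂ * ((star b ⬝ᵥ v) * (star v ⬝ᵥ b)) := by
      have hUb : star a ⬝ᵥ Uᴴ *ᵥ b = star v ⬝ᵥ b := by
        rw [Matrix.dotProduct_mulVec, ← Matrix.star_mulVec, hUa]
      have expand : (U * σ * Uᴴ) *ᵥ b = U *ᵥ (σ *ᵥ (Uᴴ *ᵥ b)) := by
        rw [Matrix.mulVec_mulVec, Matrix.mulVec_mulVec]
      rw [expand, hσ]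
      rw [Matrix.add_mulVec, Matrix.smul_mulVec, Matrix.smul_mulVec,
        Matrix.one_mulVec, stmt_8_aux_vecMulVec_mulVec]
      rw [Matrix.mulVec_add, Matrix.mulVec_smul, Matrix.mulVec_smul, Matrix.mulVec_smul,
        Matrix.mulVec_mulVec, hUU, Matrix.one_mulVec]
      rw [dotProduct_add, dotProduct_smul, dotProduct_smul,
        dotProduct_smul, hb, hUb, hUa]
      simp only [smul_eq_mul, mul_one]
      ring
    rw [hL] at heq
    rw [hR] at heq
    exact heq
  -- the quadratic form of the difference vanishes
  have hzero : ∀ v : Fin D → ℂ,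
      star v ⬝ᵥ (ρ - ((r₁ : ℂ) • (1 : Matrix (Fin D) (Fin D) ℂ)
        + (r₂ : ℂ) • vecMulVec b (star b))) *ᵥ v = 0 := by
    intro v
    by_cases hv0 : v = 0
    · subst hv0; simp
    · set t : ℝ := ∑ i, Complex.normSq (v i) with ht
      have hts : star v ⬝ᵥ v = (t : ℂ) := by
        simp only [dotProduct, Pi.star_apply, ht]
        push_cast
        refine Finset.sum_congr rfl fun i _ => ?_
        rw [Complex.normSq_eq_conj_mul_self]
        rfl
      have htpos : 0 < t := by
        rcases (lt_or_eq_of_le (Finset.sum_nonneg fun i _ => Complex.normSq_nonneg (v i))) with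
          h1 | h1
        · exact h1
        · exfalso
          apply hv0
          apply dotProduct_star_self_eq_zero.mp
          rw [hts]
          have ht0 : t = 0 := ht.trans h1.symm
          exact_mod_cast ht0
      set s : ℝ := (Real.sqrt t)⁻¹ with hs
      have hst : (s : ℝ) ^ 2 * t = 1 := by
        rw [hs]
        rw [inv_pow, Real.sq_sqrt htpos.le]
        field_simp
      set u : Fin D → ℂ := (s : ℂ) • v with hu
      have hscale : ∀ M : Matrix (Fin D) (Fin D) ℂ,
          star u ⬝ᵥ M *ᵥ u = ((s : ℂ) ^ 2) * (star v ⬝ᵥ M *ᵥ v) := by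
        intro M
        rw [hu]
        have : star ((s : ℂ) • v) = (s : ℂ) • star v := by
          funext i; simp [Complex.conj_ofReal]
        rw [this, Matrix.mulVec_smul, smul_dotProduct, dotProduct_smul]
        ring_nf
      have huu : star u ⬝ᵥ u = 1 := by
        rw [hu]
        have : star ((s : ℂ) • v) = (s : ℂ) • star v := by
          funext i; simp [Complex.conj_ofReal]
        rw [this, smul_dotProduct, dotProduct_smul, hts]
        rw [smul_eq_mul, smul_eq_mul]
        calc (s : ℂ) * ((s : ℂ) * (t : ℂ)) = ((s ^ 2 * t : ℝ) : ℂ) := by push_cast; ring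
          _ = 1 := by rw [hst]; norm_num
      have hq := key u huu
      have hq2 : star u ⬝ᵥ ((r₁ : ℂ) • (1 : Matrix (Fin D) (Fin D) ℂ)
          + (r₂ : ℂ) • vecMulVec b (star b)) *ᵥ u
          = r₁ + r₂ * ((star b ⬝ᵥ u) * (star u ⬝ᵥ b)) := by
        simp only [Matrix.add_mulVec, Matrix.smul_mulVec, Matrix.one_mulVec,
          stmt_8_aux_vecMulVec_mulVec, dotProduct_add, dotProduct_smul, huu,
          smul_eq_mul, mul_one]
      have hdiff : star u ⬝ᵥ (ρ - ((r₁ : ℂ) • (1 : Matrix (Fin D) (Fin D) ℂ)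
          + (r₂ : ℂ) • vecMulVec b (star b))) *ᵥ u = 0 := by
        rw [Matrix.sub_mulVec, dotProduct_sub, hq, hq2]
        ring
      rw [hscale] at hdiff
      have hsR : (s : ℝ) ≠ 0 := by
        rw [hs]
        exact inv_ne_zero (ne_of_gt (Real.sqrt_pos.mpr htpos))
      have hs0 : ((s : ℂ) ^ 2) ≠ 0 := by
        apply pow_ne_zero
        exact_mod_cast hsR
      exact (mul_eq_zero.mp hdiff).resolve_left hs0
  have := stmt_8_aux_quad_zero _ hzero
  have := sub_eq_zero.mp this
  exact this
end

section
/- Let D ≥ 1 and let N ≥ 1. Let (Π_n)_{n∈Fin N} be D×D complex matrices that are Hermitian, idempotent (Π_n² = Π_n), pairwise orthogonal (Π_n Π_m = 0 for n ≠ m), and satisfy Σ_n Π_n = 1. Let (E_n)_{n∈Fin N} be positive semidefinite D×D matrices with Σ_n E_n = 1. If Tr(E_m Π_n) = δ_{mn} · Tr(Π_n) for all m, n, then E_m = Π_m for every m. -/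
open Matrix
open scoped ComplexOrder

lemma trace_ctm_self_eq_zero {m n : Type*} [Fintype m] [Fintype n]
    (A : Matrix m n ℂ) (h : (Aᴴ * A).trace = 0) : A = 0 := by
  have h2 : ∑ j, ∑ i, Complex.normSq (A i j) = 0 := by
    have := congrArg Complex.re h
    simpa [Matrix.trace, Matrix.mul_apply, Matrix.diag, Complex.normSq_eq_conj_mul_self,
      Complex.ext_iff, Complex.normSq_apply] using this
  ext i j
  have := (Finset.sum_eq_zero_iff_of_nonneg (fun j _ => Finset.sum_nonneg
    (fun i _ => Complex.normSq_nonneg (A i j)))).mp h2 j (Finset.mem_univ j)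
  have := (Finset.sum_eq_zero_iff_of_nonneg (fun i _ => Complex.normSq_nonneg (A i j))).mp
    this i (Finset.mem_univ i)
  simpa using Complex.normSq_eq_zero.mp this

lemma psd_mul_proj_eq_zero {D : ℕ} {A Q : Matrix (Fin D) (Fin D) ℂ}
    (hA : A.PosSemidef) (hQ : Q.IsHermitian) (hQ2 : Q * Q = Q)
    (h : (A * Q).trace = 0) : A * Q = 0 := by
  open scoped MatrixOrder in
  set S := CFC.sqrt A with hS
  have hSh : Sᴴ = S := (CFC.sqrt_nonneg A).posSemidef.1
  have hSS : S * S = A := CFC.sqrt_mul_sqrt_self A hA.nonneg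
  have key : (Q * S)ᴴ * (Q * S) = S * Q * S := by
    rw [conjTranspose_mul, hSh, hQ.eq]
    rw [Matrix.mul_assoc, ← Matrix.mul_assoc Q Q S, hQ2, Matrix.mul_assoc]
  have htr : ((Q * S)ᴴ * (Q * S)).trace = 0 := by
    rw [key, Matrix.trace_mul_cycle, hSS, h]
  have hQS : Q * S = 0 := trace_ctm_self_eq_zero _ htr
  have hSQ : S * Q = 0 := by
    have := congrArg conjTranspose hQS
    rwa [conjTranspose_mul, hSh, hQ.eq, conjTranspose_zero] at this
  calc A * Q = S * (S * Q) := by rw [← Matrix.mul_assoc, hSS]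
    _ = 0 := by rw [hSQ, Matrix.mul_zero]

/-- Appendix A of the paper: if `(Π_n)` is a complete family of mutually orthogonal Hermitian
projections, `(E_n)` is a family of positive semidefinite effects summing to the identity, and
`Tr(E_m Π_n) = δ_{mn} Tr(Π_n)` (the measurement is error free), then every effect equals the
corresponding projection: `E_m = Π_m`. -/
theorem stmt_9 (D N : ℕ) (hD : 1 ≤ D) (hN : 1 ≤ N)
    (P : Fin N → Matrix (Fin D) (Fin D) ℂ)
    (hPherm : ∀ n, (P n).IsHermitian)
    (hPidem : ∀ n, P n * P n = P n)
    (hPorth : ∀ n m, n ≠ m → P n * P m = 0)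
    (hPsum : ∑ n, P n = 1)
    (E : Fin N → Matrix (Fin D) (Fin D) ℂ)
    (hEpos : ∀ n, (E n).PosSemidef)
    (hEsum : ∑ n, E n = 1)
    (herr : ∀ m n, (E m * P n).trace = if m = n then (P n).trace else 0) :
    ∀ m, E m = P m := by
  intro m
  have hzero : ∀ k n, k ≠ n → E k * P n = 0 := fun k n hkn =>
    psd_mul_proj_eq_zero (hEpos k) (hPherm n) (hPidem n)
      (by rw [herr k n, if_neg hkn])
  have h1 : E m = E m * P m := by
    calc E m = E m * 1 := by rw [Matrix.mul_one]
    _ = ∑ n, E m * P n := by rw [← hPsum, Finset.mul_sum]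
    _ = E m * P m := Finset.sum_eq_single m (fun n _ hn => hzero m n (Ne.symm hn))
        (fun h => absurd (Finset.mem_univ m) h)
  have h2 : P m = P m * E m := by
    have hPE : ∀ k, k ≠ m → P m * E k = 0 := by
      intro k hk
      have := congrArg conjTranspose (hzero k m hk)
      rwa [conjTranspose_mul, (hPherm m).eq, (hEpos k).1.eq, conjTranspose_zero] at this
    calc P m = P m * 1 := by rw [Matrix.mul_one]
    _ = ∑ k, P m * E k := by rw [← hEsum, Finset.mul_sum]
    _ = P m * E m := Finset.sum_eq_single m (fun k _ hk => hPE k hk)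
        (fun h => absurd (Finset.mem_univ m) h)
  have h3 : P m = E m * P m := by
    have := congrArg conjTranspose h2
    rwa [conjTranspose_mul, (hPherm m).eq, (hEpos m).1.eq] at this
  rw [h1, ← h3]
end

section
/- Let D ≥ 1, N ≥ 1, M ≥ 1 and β > 0. Let (Π_n)_{n∈Fin N} and (Q_m)_{m∈Fin M} be two families of D×D complex matrices, each family consisting of Hermitian idempotents that are pairwise orthogonal and sum to the identity. Let e : Fin N → ℝ and f : Fin M → ℝ. Let U be a unitary D×D matrix. For each n let (A_{n,l})_{l∈Fin L} be D×D matrices and set φ_n(ρ) = Σ_l A_{n,l} Π_n ρ Π_n A_{n,l}*. Assume: (i) trace preservation on each sector: Π_n (Σ_l A_{n,l}* A_{n,l}) Π_n = Π_n for all n; (ii) unitality of the nonselective measurement: Σ_n φ_n(1) = Σ_{n,l} A_{n,l} Π_n A_{n,l}* = 1; (iii) (E_m)_{m∈Fin M} are positive semidefinite matrices with Σ_m E_m = 1 and Tr(E_m) = Tr(Q_m) for all m. Then Σ_{m,n} exp(−β(f_m − e_n)) · exp(−β e_n) · Tr(E_m · U · φ_n(Π_n) · U*) = Σ_m Tr(Q_m)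 · exp(−β f_m); equivalently, the average exponentiated work ⟨e^{−βw}⟩ = Z(0)^{−1} Σ_{m,n} e^{−β(f_m−e_n)} e^{−βe_n} Tr(E_m U φ_n(Π_n) U*) equals Z(τ)/Z(0), where Z(0) = Σ_n Tr(Π_n) e^{−β e_n} and Z(τ) = Σ_m Tr(Q_m) e^{−β f_m}. -/
open Matrix
open scoped ComplexOrder

/-- Sufficiency of condition (Ji) for the Jarzynski equality in the two-energy-measurement
scheme: with an error-free, sector-wise trace preserving and (nonselectively) unital first
measurement `φ_n(ρ) = Σ_l A_{n,l} Π_n ρ Π_n A_{n,l}ᴴ`, and second-measurement effects `E_m`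
that are positive semidefinite, sum to the identity, and satisfy `Tr E_m = Tr Q_m`, the
average exponentiated work equals `Z(τ)/Z(0)`. -/
theorem stmt_11 (D N M L : ℕ) (hD : 1 ≤ D) (hN : 1 ≤ N) (hM : 1 ≤ M)
    (β : ℝ) (hβ : 0 < β)
    (P : Fin N → Matrix (Fin D) (Fin D) ℂ)
    (hPherm : ∀ n, (P n).IsHermitian)
    (hPidem : ∀ n, P n * P n = P n)
    (hPorth : ∀ n m, n ≠ m → P n * P m = 0)
    (hPsum : ∑ n, P n = 1)
    (Q : Fin M → Matrix (Fin D) (Fin D) ℂ)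
    (hQherm : ∀ m, (Q m).IsHermitian)
    (hQidem : ∀ m, Q m * Q m = Q m)
    (hQorth : ∀ m k, m ≠ k → Q m * Q k = 0)
    (hQsum : ∑ m, Q m = 1)
    (e : Fin N → ℝ) (f : Fin M → ℝ)
    (U : Matrix (Fin D) (Fin D) ℂ) (hU : Uᴴ * U = 1)
    (A : Fin N → Fin L → Matrix (Fin D) (Fin D) ℂ)
    (htp : ∀ n, P n * (∑ l, (A n l)ᴴ * A n l) * P n = P n)
    (hunital : ∑ n, ∑ l, A n l * P n * (A n l)ᴴ = 1)
    (E : Fin M → Matrix (Fin D) (Fin D) ℂ)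
    (hEpos : ∀ m, (E m).PosSemidef)
    (hEsum : ∑ m, E m = 1)
    (hEtr : ∀ m, (E m).trace = (Q m).trace) :
    ∑ m, ∑ n,
        (Real.exp (-β * (f m - e n)) : ℂ) * (Real.exp (-β * e n) : ℂ) *
          (E m * (U * (∑ l, A n l * P n * P n * P n * (A n l)ᴴ) * Uᴴ)).trace
      = ∑ m, (Q m).trace * (Real.exp (-β * f m) : ℂ) := by
  have hUU : U * Uᴴ = 1 := mul_eq_one_comm.mp hU
  have hP3 : ∀ n, ∀ l, A n l * P n * P n * P n * (A n l)ᴴ = A n l * P n * (A n l)ᴴ := by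
    intro n l
    rw [mul_assoc (A n l), hPidem, mul_assoc (A n l), hPidem]
  have hcoef : ∀ (m : Fin M) (n : Fin N),
      (Real.exp (-β * (f m - e n)) : ℂ) * (Real.exp (-β * e n) : ℂ)
        = (Real.exp (-β * f m) : ℂ) := by
    intro m n
    rw [← Complex.ofReal_mul, ← Real.exp_add]
    ring_nf
  refine Finset.sum_congr rfl fun m _ => ?_
  have : ∀ n : Fin N, (Real.exp (-β * (f m - e n)) : ℂ) * (Real.exp (-β * e n) : ℂ) *
          (E m * (U * (∑ l, A n l * P n * P n * P n * (A n l)ᴴ) * Uᴴ)).trace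
      = (Real.exp (-β * f m) : ℂ) *
          (E m * (U * (∑ l, A n l * P n * (A n l)ᴴ) * Uᴴ)).trace := by
    intro n
    rw [hcoef]
    have h : (∑ l, A n l * P n * P n * P n * (A n l)ᴴ) = ∑ l, A n l * P n * (A n l)ᴴ :=
      Finset.sum_congr rfl fun l _ => hP3 n l
    rw [h]
  rw [Finset.sum_congr rfl fun n _ => this n, ← Finset.mul_sum]
  have hsum : ∑ n : Fin N, (E m * (U * (∑ l, A n l * P n * (A n l)ᴴ) * Uᴴ)).trace
      = (E m).trace := by
    rw [← Matrix.trace_sum]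
    have h2 : ∑ n : Fin N, E m * (U * (∑ l, A n l * P n * (A n l)ᴴ) * Uᴴ)
        = E m * (U * (∑ n, ∑ l, A n l * P n * (A n l)ᴴ) * Uᴴ) := by
      simp only [Finset.mul_sum, Finset.sum_mul]
    rw [h2, hunital, mul_one, hUU, mul_one]
  rw [hsum, hEtr, mul_comm]
end

section
/- Let D ≥ 1, N ≥ 1, M ≥ 1 and β > 0. Let (Π_n)_{n∈Fin N} and (Q_m)_{m∈Fin M} be two families of D×D complex matrices, each family consisting of Hermitian idempotents that are pairwise orthogonal and sum to the identity. Let e : Fin N → ℝ and f : Fin M → ℝ. Let U be a unitary D×D matrix. For each n let (A_{n,l})_{l∈Fin L} be D×D matrices with Π_n (Σ_l A_{n,l}* A_{n,l}) Π_n = Π_n, and set φ_n(ρ) = Σ_l A_{n,l} Π_n ρ Π_n A_{n,l}*. Let E_m = (Tr(Q_m)/D) · 1 for each m. Then Σ_{m,n} exp(−β(f_m − e_n)) · exp(−β e_n) · Tr(E_m · U · φ_n(Π_n) · U*) = Σ_m Tr(Q_m) · exp(−β f_m), i.e., the Jarzynski equality ⟨e^{−βw}⟩ = Z(τ)/Z(0)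 holds with Z(0) = Σ_n Tr(Π_n) e^{−β e_n} and Z(τ) = Σ_m Tr(Q_m) e^{−β f_m}. -/
open Matrix
open scoped ComplexOrder

/-- Sufficiency of condition (Jii) for the Jarzynski equality in the two-energy-measurement
scheme: with an error-free, sector-wise trace preserving first measurement
`φ_n(ρ) = Σ_l A_{n,l} Π_n ρ Π_n A_{n,l}ᴴ` and second-measurement effects proportional to the
identity, `E_m = (Tr Q_m / D) • 1`, the average exponentiated work equals `Z(τ)/Z(0)`. -/
theorem stmt_12 (D N M L : ℕ) (hD : 1 ≤ D) (hN : 1 ≤ N) (hM : 1 ≤ M)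
    (β : ℝ) (hβ : 0 < β)
    (P : Fin N → Matrix (Fin D) (Fin D) ℂ)
    (hPherm : ∀ n, (P n).IsHermitian)
    (hPidem : ∀ n, P n * P n = P n)
    (hPorth : ∀ n m, n ≠ m → P n * P m = 0)
    (hPsum : ∑ n, P n = 1)
    (Q : Fin M → Matrix (Fin D) (Fin D) ℂ)
    (hQherm : ∀ m, (Q m).IsHermitian)
    (hQidem : ∀ m, Q m * Q m = Q m)
    (hQorth : ∀ m k, m ≠ k → Q m * Q k = 0)
    (hQsum : ∑ m, Q m = 1)
    (e : Fin N → ℝ) (f : Fin M → ℝ)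
    (U : Matrix (Fin D) (Fin D) ℂ) (hU : Uᴴ * U = 1)
    (A : Fin N → Fin L → Matrix (Fin D) (Fin D) ℂ)
    (htp : ∀ n, P n * (∑ l, (A n l)ᴴ * A n l) * P n = P n)
    (E : Fin M → Matrix (Fin D) (Fin D) ℂ)
    (hE : ∀ m, E m = ((Q m).trace / (D : ℂ)) • (1 : Matrix (Fin D) (Fin D) ℂ)) :
    ∑ m, ∑ n,
        (Real.exp (-β * (f m - e n)) : ℂ) * (Real.exp (-β * e n) : ℂ) *
          (E m * (U * (∑ l, A n l * P n * P n * P n * (A n l)ᴴ) * Uᴴ)).trace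
      = ∑ m, (Q m).trace * (Real.exp (-β * f m) : ℂ) := by
  have hD' : (D : ℂ) ≠ 0 := by
    exact_mod_cast Nat.cast_ne_zero.mpr (by omega)
  -- trace of φ_n(Π_n)
  have hX : ∀ n, (∑ l, A n l * P n * P n * P n * (A n l)ᴴ).trace = (P n).trace := by
    intro n
    have : (∑ l, A n l * P n * P n * P n * (A n l)ᴴ).trace
        = (P n * (∑ l, (A n l)ᴴ * A n l) * P n).trace := by
      rw [trace_sum, Matrix.mul_sum, Finset.sum_mul, trace_sum]
      refine Finset.sum_congr rfl fun l _ => ?_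
      have h1 : (P n * ((A n l)ᴴ * A n l) * P n).trace
          = ((A n l)ᴴ * A n l * P n).trace := by
        rw [trace_mul_comm, ← Matrix.mul_assoc, hPidem n, trace_mul_comm]
      rw [h1, Matrix.mul_assoc (A n l * P n), hPidem n, Matrix.mul_assoc (A n l),
        hPidem n, trace_mul_comm, ← Matrix.mul_assoc]
    rw [this, htp n]
  -- trace of Π_n's sum to D
  have hsumtr : ∑ n, (P n).trace = (D : ℂ) := by
    rw [← trace_sum, hPsum, trace_one]; simp
  have key : ∀ m n,
      (E m * (U * (∑ l, A n l * P n * P n * P n * (A n l)ᴴ) * Uᴴ)).trace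
        = (Q m).trace / (D : ℂ) * (P n).trace := by
    intro m n
    rw [hE m, smul_mul_assoc, trace_smul, one_mul, smul_eq_mul]
    congr 1
    calc (U * (∑ l, A n l * P n * P n * P n * (A n l)ᴴ) * Uᴴ).trace
        = (Uᴴ * (U * (∑ l, A n l * P n * P n * P n * (A n l)ᴴ))).trace := trace_mul_comm _ _
      _ = (P n).trace := by rw [← Matrix.mul_assoc, hU, one_mul, hX n]
  calc ∑ m, ∑ n,
        (Real.exp (-β * (f m - e n)) : ℂ) * (Real.exp (-β * e n) : ℂ) *
          (E m * (U * (∑ l, A n l * P n * P n * P n * (A n l)ᴴ) * Uᴴ)).trace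
      = ∑ m, ∑ n, (Real.exp (-β * f m) : ℂ) * ((Q m).trace / (D : ℂ) * (P n).trace) := by
        refine Finset.sum_congr rfl fun m _ => Finset.sum_congr rfl fun n _ => ?_
        rw [key m n, ← Complex.ofReal_mul, ← Real.exp_add]
        ring_nf
    _ = ∑ m, (Q m).trace * (Real.exp (-β * f m) : ℂ) := by
        refine Finset.sum_congr rfl fun m _ => ?_
        rw [← Finset.mul_sum, ← Finset.mul_sum, hsumtr]
        field_simp
end

section
/- Let D ≥ 1, N ≥ 1, M ≥ 1 and β > 0. Let (Π_n)_{n∈Fin N} and (Q_m)_{m∈Fin M} be two families of D×D complex matrices, each family consisting of Hermitian idempotents that are pairwise orthogonal and sum to the identity, and let e : Fin N → ℝ, f : Fin M → ℝ. Let (V_k)_{k∈Fin K} be D×D matrices with Σ_k V_k* V_k = 1 and Σ_k V_k V_k* = 1, and set 𝒰(ρ) = Σ_k V_k ρ V_k*. For each n let (A_{n,l})_{l∈Fin L} be matrices with Π_n (Σ_l A_{n,l}* A_{n,l}) Π_n = Π_n and Σ_{n,l} A_{n,l} Π_n A_{n,l}* = 1, and set φ_n(ρ) = Σ_l A_{n,l}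 Π_n ρ Π_n A_{n,l}*. Let (E_m) be positive semidefinite with Σ_m E_m = 1 and Tr(E_m) = Tr(Q_m). Then Σ_{m,n} exp(−β(f_m − e_n)) · exp(−β e_n) · Tr(E_m · 𝒰(φ_n(Π_n))) = Σ_m Tr(Q_m) · exp(−β f_m). -/
open Matrix
open scoped ComplexOrder

/-- Sufficiency of condition (Ji) for the Jarzynski equality with the unitary dynamics
replaced by an arbitrary unital quantum channel `𝒰(ρ) = Σ_k V_k ρ V_kᴴ`
(`Σ V_kᴴ V_k = 1 = Σ V_k V_kᴴ`). -/
theorem stmt_13 (D N M L K : ℕ) (hD : 1 ≤ D) (hN : 1 ≤ N) (hM : 1 ≤ M)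
    (β : ℝ) (hβ : 0 < β)
    (P : Fin N → Matrix (Fin D) (Fin D) ℂ)
    (hPherm : ∀ n, (P n).IsHermitian)
    (hPidem : ∀ n, P n * P n = P n)
    (hPorth : ∀ n m, n ≠ m → P n * P m = 0)
    (hPsum : ∑ n, P n = 1)
    (Q : Fin M → Matrix (Fin D) (Fin D) ℂ)
    (hQherm : ∀ m, (Q m).IsHermitian)
    (hQidem : ∀ m, Q m * Q m = Q m)
    (hQorth : ∀ m k, m ≠ k → Q m * Q k = 0)
    (hQsum : ∑ m, Q m = 1)
    (e : Fin N → ℝ) (f : Fin M → ℝ)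
    (V : Fin K → Matrix (Fin D) (Fin D) ℂ)
    (hV1 : ∑ k, (V k)ᴴ * V k = 1) (hV2 : ∑ k, V k * (V k)ᴴ = 1)
    (A : Fin N → Fin L → Matrix (Fin D) (Fin D) ℂ)
    (htp : ∀ n, P n * (∑ l, (A n l)ᴴ * A n l) * P n = P n)
    (hunital : ∑ n, ∑ l, A n l * P n * (A n l)ᴴ = 1)
    (E : Fin M → Matrix (Fin D) (Fin D) ℂ)
    (hEpos : ∀ m, (E m).PosSemidef)
    (hEsum : ∑ m, E m = 1)
    (hEtr : ∀ m, (E m).trace = (Q m).trace) :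
    ∑ m, ∑ n,
        (Real.exp (-β * (f m - e n)) : ℂ) * (Real.exp (-β * e n) : ℂ) *
          (E m * (∑ k, V k * (∑ l, A n l * P n * P n * P n * (A n l)ᴴ) * (V k)ᴴ)).trace
      = ∑ m, (Q m).trace * (Real.exp (-β * f m) : ℂ) := by

  have hexp : ∀ (m : Fin M) (n : Fin N),
      (Real.exp (-β * (f m - e n)) : ℂ) * (Real.exp (-β * e n) : ℂ)
        = (Real.exp (-β * f m) : ℂ) := by
    intro m n
    rw [← Complex.ofReal_mul, ← Real.exp_add]
    ring_nf
  have hS : ∀ n, (∑ l, A n l * P n * P n * P n * (A n l)ᴴ)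
      = ∑ l, A n l * P n * (A n l)ᴴ := by
    intro n
    refine Finset.sum_congr rfl fun l _ => ?_
    rw [mul_assoc (A n l) (P n) (P n), hPidem, mul_assoc (A n l) (P n) (P n), hPidem]
  calc ∑ m, ∑ n,
        (Real.exp (-β * (f m - e n)) : ℂ) * (Real.exp (-β * e n) : ℂ) *
          (E m * (∑ k, V k * (∑ l, A n l * P n * P n * P n * (A n l)ᴴ) * (V k)ᴴ)).trace
      = ∑ m, (Real.exp (-β * f m) : ℂ) *
          (E m * (∑ n, ∑ k, V k * (∑ l, A n l * P n * (A n l)ᴴ) * (V k)ᴴ)).trace := by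
        refine Finset.sum_congr rfl fun m _ => ?_
        rw [Matrix.mul_sum, Matrix.trace_sum, Finset.mul_sum]
        refine Finset.sum_congr rfl fun n _ => ?_
        rw [hexp, hS]
    _ = ∑ m, (Real.exp (-β * f m) : ℂ) * (Q m).trace := by
        have : (∑ n, ∑ k, V k * (∑ l, A n l * P n * (A n l)ᴴ) * (V k)ᴴ)
            = (1 : Matrix (Fin D) (Fin D) ℂ) := by
          rw [Finset.sum_comm]
          have : ∀ k : Fin K, (∑ n, V k * (∑ l, A n l * P n * (A n l)ᴴ) * (V k)ᴴ)
              = V k * (V k)ᴴ := by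
            intro k
            have : (∑ n, V k * (∑ l, A n l * P n * (A n l)ᴴ) * (V k)ᴴ)
                = V k * (∑ n, ∑ l, A n l * P n * (A n l)ᴴ) * (V k)ᴴ := by
              rw [Matrix.mul_sum, Matrix.sum_mul]
            rw [this, hunital, mul_one]
          rw [Finset.sum_congr rfl fun k _ => this k, hV2]
        rw [this]
        refine Finset.sum_congr rfl fun m _ => ?_
        rw [mul_one, hEtr]
    _ = ∑ m, (Q m).trace * (Real.exp (-β * f m) : ℂ) := by
        refine Finset.sum_congr rfl fun m _ => mul_comm _ _
end

section
/- Let D ≥ 2 and let N be a positive semidefinite D×D matrix with Tr(N) = D, E a positive semidefinite D×D matrix, and d > 0 a real number. If Tr(U* E U N) = d holds for every unitary D×D matrix U, then either N = 1 and Tr(E) = d, or E = (d/D)·1. -/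
open Matrix
open scoped ComplexOrder

section Aux

variable {D : ℕ}

/-- conjugate transpose of a permutation matrix (over ℂ) is the matrix of the inverse. -/
lemma permMatrix_conjTranspose (σ : Equiv.Perm (Fin D)) :
    ((σ.toPEquiv.toMatrix : Matrix (Fin D) (Fin D) ℂ))ᴴ
      = ((σ⁻¹).toPEquiv.toMatrix : Matrix (Fin D) (Fin D) ℂ) := by
  have h1 : ((σ.toPEquiv.toMatrix : Matrix (Fin D) (Fin D) ℂ))ᴴ
      = ((σ.toPEquiv.toMatrix : Matrix (Fin D) (Fin D) ℂ))ᵀ := by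
    ext i j
    simp only [conjTranspose_apply, transpose_apply, PEquiv.toMatrix_apply]
    split_ifs <;> simp
  rw [h1, ← PEquiv.toMatrix_symm, ← Equiv.toPEquiv_symm]
  rfl

lemma permMatrix_unitary (σ : Equiv.Perm (Fin D)) :
    ((σ.toPEquiv.toMatrix : Matrix (Fin D) (Fin D) ℂ))ᴴ
      * (σ.toPEquiv.toMatrix : Matrix (Fin D) (Fin D) ℂ) = 1 := by
  rw [permMatrix_conjTranspose, ← PEquiv.toMatrix_trans, ← Equiv.toPEquiv_trans]
  have h2 : (σ⁻¹ : Equiv.Perm (Fin D)).trans σ = Equiv.refl (Fin D) := by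
    ext x; simp
  rw [h2, Equiv.toPEquiv_refl, PEquiv.toMatrix_refl]

end Aux

/-- Application of Lemma 3 in Section V of the paper: if `N` is positive semidefinite with
`Tr N = D`, `E` is positive semidefinite, `d > 0`, and `Tr(U* E U N) = d` for every unitary
`U`, then either `N = 1` and `Tr E = d`, or `E = (d/D) • 1`. This yields the dichotomy
between conditions (Ji) and (Jii) for the Jarzynski equality. -/
theorem stmt_14 (D : ℕ) (hD : 2 ≤ D)
    (N E : Matrix (Fin D) (Fin D) ℂ)
    (hN : N.PosSemidef) (hNtr : N.trace = (D : ℂ))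
    (hE : E.PosSemidef)
    (d : ℝ) (hd : 0 < d)
    (h : ∀ U : Matrix (Fin D) (Fin D) ℂ, Uᴴ * U = 1 → (Uᴴ * E * U * N).trace = (d : ℂ)) :
    (N = 1 ∧ E.trace = (d : ℂ)) ∨
      E = ((d / D : ℝ) : ℂ) • (1 : Matrix (Fin D) (Fin D) ℂ) := by
  have hDpos : (0 : ℝ) < D := by positivity
  have hEh : E.IsHermitian := hE.1
  have hNh : N.IsHermitian := hN.1
  set V : Matrix (Fin D) (Fin D) ℂ := (hEh.eigenvectorUnitary : Matrix (Fin D) (Fin D) ℂ)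
    with hVdef
  set W : Matrix (Fin D) (Fin D) ℂ := (hNh.eigenvectorUnitary : Matrix (Fin D) (Fin D) ℂ)
    with hWdef
  set e : Fin D → ℝ := hEh.eigenvalues with hedef
  set ν : Fin D → ℝ := hNh.eigenvalues with hνdef
  have hV1 : Vᴴ * V = 1 := by
    simpa [hVdef, star_eq_conjTranspose] using
      (Matrix.mem_unitaryGroup_iff').mp hEh.eigenvectorUnitary.2
  have hV2 : V * Vᴴ = 1 := by
    simpa [hVdef, star_eq_conjTranspose] using
      (Matrix.mem_unitaryGroup_iff).mp hEh.eigenvectorUnitary.2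
  have hW1 : Wᴴ * W = 1 := by
    simpa [hWdef, star_eq_conjTranspose] using
      (Matrix.mem_unitaryGroup_iff').mp hNh.eigenvectorUnitary.2
  have hW2 : W * Wᴴ = 1 := by
    simpa [hWdef, star_eq_conjTranspose] using
      (Matrix.mem_unitaryGroup_iff).mp hNh.eigenvectorUnitary.2
  have hEspec : E = V * diagonal (fun i => (e i : ℂ)) * Vᴴ := by
    have := hEh.spectral_theorem
    simpa [hVdef, hedef, star_eq_conjTranspose, Function.comp_def] using this
  have hNspec : N = W * diagonal (fun i => (ν i : ℂ)) * Wᴴ := by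
    have := hNh.spectral_theorem
    simpa [hWdef, hνdef, star_eq_conjTranspose, Function.comp_def] using this
  -- trace of N equals sum of eigenvalues
  have hνsum : (∑ i, (ν i : ℂ)) = (D : ℂ) := by
    have h1 : N.trace = (∑ i, (ν i : ℂ)) := by
      rw [hNspec, trace_mul_cycle, hW1, Matrix.one_mul, trace_diagonal]
    rw [← h1, hNtr]
  -- key identity: for any permutation σ, ∑ i, e (σ i) * ν i = d
  have key : ∀ σ : Equiv.Perm (Fin D), (∑ i, (e (σ i) : ℂ) * (ν i : ℂ)) = (d : ℂ) := by
    intro σ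
    set P : Matrix (Fin D) (Fin D) ℂ := ((σ⁻¹).toPEquiv.toMatrix : Matrix (Fin D) (Fin D) ℂ)
      with hPdef
    have hPu : Pᴴ * P = 1 := permMatrix_unitary _
    have hPc : Pᴴ = (σ.toPEquiv.toMatrix : Matrix (Fin D) (Fin D) ℂ) := by
      rw [hPdef, permMatrix_conjTranspose, inv_inv]
    set U : Matrix (Fin D) (Fin D) ℂ := V * P * Wᴴ with hUdef
    have hUc : Uᴴ = W * Pᴴ * Vᴴ := by
      simp [hUdef, conjTranspose_mul, Matrix.mul_assoc]
    have hU : Uᴴ * U = 1 :=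
      calc Uᴴ * U
          = (W * Pᴴ) * ((Vᴴ * V) * (P * Wᴴ)) := by
            rw [hUc, hUdef]; simp only [Matrix.mul_assoc]
        _ = (W * Pᴴ) * (P * Wᴴ) := by rw [hV1, Matrix.one_mul]
        _ = W * (Pᴴ * P) * Wᴴ := by simp only [Matrix.mul_assoc]
        _ = 1 := by rw [hPu, Matrix.mul_one, hW2]
    have hUEU : Uᴴ * E * U = W * (Pᴴ * diagonal (fun i => (e i : ℂ)) * P) * Wᴴ :=
      calc Uᴴ * E * U
          = (W * Pᴴ) * ((Vᴴ * V) * ((diagonal fun i => (e i : ℂ)) * ((Vᴴ * V) * (P * Wᴴ)))) := by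
            rw [hUc, hEspec, hUdef]; simp only [Matrix.mul_assoc]
        _ = (W * Pᴴ) * ((diagonal fun i => (e i : ℂ)) * (P * Wᴴ)) := by
            rw [hV1, Matrix.one_mul, Matrix.one_mul]
        _ = W * (Pᴴ * (diagonal fun i => (e i : ℂ)) * P) * Wᴴ := by
            simp only [Matrix.mul_assoc]
    have hPdP : Pᴴ * diagonal (fun i => (e i : ℂ)) * P
        = diagonal (fun i => (e (σ i) : ℂ)) := by
      rw [hPc, hPdef, PEquiv.toMatrix_toPEquiv_mul, PEquiv.mul_toMatrix_toPEquiv]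
      rw [show ((σ⁻¹ : Equiv.Perm (Fin D)) : Fin D ≃ Fin D).symm = (σ : Fin D ≃ Fin D) from
        Equiv.symm_symm σ]
      rw [Matrix.submatrix_submatrix]
      simp only [Function.comp_id, Function.id_comp]
      rw [Matrix.submatrix_diagonal _ _ σ.injective]
      rfl
    have htr := h U hU
    rw [hUEU, hPdP, hNspec] at htr
    rw [show W * (diagonal fun i => (e (σ i) : ℂ)) * Wᴴ *
          (W * (diagonal fun i => (ν i : ℂ)) * Wᴴ)
        = (W * (diagonal fun i => (e (σ i) : ℂ))) * ((Wᴴ * W) *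
            ((diagonal fun i => (ν i : ℂ)) * Wᴴ)) from by simp only [Matrix.mul_assoc]] at htr
    rw [hW1, Matrix.one_mul] at htr
    rw [show (W * (diagonal fun i => (e (σ i) : ℂ))) * ((diagonal fun i => (ν i : ℂ)) * Wᴴ)
        = W * ((diagonal fun i => (e (σ i) : ℂ)) * (diagonal fun i => (ν i : ℂ))) * Wᴴ from by
          simp only [Matrix.mul_assoc]] at htr
    rw [trace_mul_cycle, hW1, Matrix.one_mul, diagonal_mul_diagonal, trace_diagonal] at htr
    exact htr
  by_cases hcase : ∀ i j : Fin D, ν i = ν j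
  · -- N = 1
    left
    have hν1 : ∀ i, ν i = 1 := by
      intro i
      have hall : (∑ j, (ν j : ℂ)) = (D : ℂ) * (ν i : ℂ) := by
        rw [Finset.sum_congr rfl (fun j _ => show ((ν j : ℂ)) = ((ν i : ℂ)) from by
          rw [hcase j i])]
        simp [Finset.sum_const, nsmul_eq_mul]
      have hh : (D : ℂ) * (ν i : ℂ) = (D : ℂ) := by rw [← hall, hνsum]
      have hDne : (D : ℂ) ≠ 0 := by
        exact_mod_cast (show (D : ℝ) ≠ 0 from ne_of_gt hDpos)
      have := mul_left_cancel₀ hDne (hh.trans (mul_one (D : ℂ)).symm)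
      exact_mod_cast this
    have hNone : N = 1 := by
      rw [hNspec]
      have hdiagone : (diagonal fun i => ((ν i : ℂ))) = 1 := by
        rw [show (fun i => ((ν i : ℂ))) = fun _ => (1 : ℂ) from funext fun i => by
          rw [hν1 i]; norm_num]
        exact diagonal_one
      rw [hdiagone, Matrix.mul_one, hW2]
    refine ⟨hNone, ?_⟩
    have := h 1 (by simp)
    simpa [hNone] using this
  · -- E is scalar
    right
    push_neg at hcase
    obtain ⟨i, j, hij⟩ := hcase
    have hijne : i ≠ j := fun hh => hij (by rw [hh])
    -- all eigenvalues of E are equal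
    have heq : ∀ a b : Fin D, e a = e b := by
      intro a b
      by_cases hab : a = b
      · rw [hab]
      · -- construct σ with σ i = a, σ j = b
        have hca : Equiv.swap i a j ≠ a := by
          intro hh
          have : Equiv.swap i a j = Equiv.swap i a i := by
            rw [hh, Equiv.swap_apply_left]
          exact hijne ((Equiv.injective _ this)).symm
        set σ : Equiv.Perm (Fin D) := Equiv.swap (Equiv.swap i a j) b * Equiv.swap i a
          with hσdef
        have hσi : σ i = a := by
          rw [hσdef, Equiv.Perm.mul_apply, Equiv.swap_apply_left]
          exact Equiv.swap_apply_of_ne_of_ne (Ne.symm hca) hab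
        have hσj : σ j = b := by
          rw [hσdef, Equiv.Perm.mul_apply]
          exact Equiv.swap_apply_left _ _
        -- compare key σ and key (σ * swap i j)
        have h1 := key σ
        have h2 := key (σ * Equiv.swap i j)
        have hsplit : ∀ f : Fin D → ℂ, (∑ k, f k)
            = f i + (f j + ∑ k ∈ (Finset.univ.erase i).erase j, f k) := by
          intro f
          rw [← Finset.add_sum_erase _ f (Finset.mem_univ i),
            ← Finset.add_sum_erase _ f (Finset.mem_erase.mpr ⟨Ne.symm hijne, Finset.mem_univ j⟩)]
        rw [hsplit] at h1 h2
        have htail : (∑ k ∈ (Finset.univ.erase i).erase j,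
              (e ((σ * Equiv.swap i j) k) : ℂ) * (ν k : ℂ))
            = ∑ k ∈ (Finset.univ.erase i).erase j, (e (σ k) : ℂ) * (ν k : ℂ) := by
          refine Finset.sum_congr rfl fun k hk => ?_
          rw [Finset.mem_erase, Finset.mem_erase] at hk
          rw [Equiv.Perm.mul_apply, Equiv.swap_apply_of_ne_of_ne hk.2.1 hk.1]
        rw [htail] at h2
        have hswapi : (σ * Equiv.swap i j) i = b := by
          rw [Equiv.Perm.mul_apply, Equiv.swap_apply_left, hσj]
        have hswapj : (σ * Equiv.swap i j) j = a := by
          rw [Equiv.Perm.mul_apply, Equiv.swap_apply_right, hσi]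
        rw [hσi, hσj] at h1
        rw [hswapi, hswapj] at h2
        have hdiff : ((e a : ℂ) - (e b : ℂ)) * ((ν i : ℂ) - (ν j : ℂ)) = 0 := by
          have h12 := h1.trans h2.symm
          linear_combination h12
        rcases mul_eq_zero.mp hdiff with hh | hh
        · exact_mod_cast sub_eq_zero.mp hh
        · exact absurd (show (ν i : ℝ) = (ν j : ℝ) from by
            exact_mod_cast sub_eq_zero.mp hh) hij
    -- so e = const, value d / D
    set c : ℝ := e ⟨0, by omega⟩ with hcdef
    have hec : ∀ a, e a = c := fun a => heq a _
    have hcd : c * D = d := by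
      have h1 := key 1
      have hsum : (∑ k, (e ((1 : Equiv.Perm (Fin D)) k) : ℂ) * (ν k : ℂ))
          = (c : ℂ) * ∑ k, (ν k : ℂ) := by
        rw [Finset.mul_sum]
        refine Finset.sum_congr rfl fun k _ => ?_
        rw [show (1 : Equiv.Perm (Fin D)) k = k from rfl, hec k]
      rw [hsum, hνsum] at h1
      exact_mod_cast h1
    have hDne : (D : ℝ) ≠ 0 := ne_of_gt hDpos
    have hcval : c = d / D := by
      field_simp
      linarith [hcd]
    rw [hEspec]
    have hdiagc : (diagonal fun i => ((e i : ℂ))) = ((d / D : ℝ) : ℂ) • 1 := by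
      rw [show (fun i => ((e i : ℂ))) = fun _ => ((d / D : ℝ) : ℂ) from funext fun i => by
        rw [hec i, hcval]]
      ext a b
      by_cases hab : a = b <;> simp [diagonal_apply, Matrix.one_apply, hab]
    rw [hdiagc, Matrix.mul_smul, Matrix.smul_mul, Matrix.mul_one, hV2]
end
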